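/- arXiv:1707.08305 — 10 statements merged into one kernel-verified Lean document; each statement's English description precedes it below -/
import Mathlib

section
/- Let K ≥ 1 be an integer and let n1/m1 < n2/m2 be a Farey pair of order K with m1 ≥ 1 and m2 ≥ 1. Let X, Y > 0 be reals with n1/m1 < Y/X < n2/m2, and set d(m,n) = |X·n − Y·m|. Then: (1) if Y/X = (n1+n2)/(m1+m2), then d(m1,n1) = d(m2,n2); (2) if Y/X < (n1+n2)/(m1+m2), then d(m1,n1) < d(m2,n2); (3) if Y/X > (n1+n2)/(m1+m2), then d(m1,n1) > d(m2,n2). -/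
/-- Membership in the extended Farey sequence of order `K`:
`(m, n)` is a coprime pair of nonnegative integers, not both zero,
with `m ≤ K` and `n ≤ K`, representing the fraction `n / m`. -/
def FareyMem (K m n : ℕ) : Prop :=
  Nat.Coprime m n ∧ ¬(m = 0 ∧ n = 0) ∧ m ≤ K ∧ n ≤ K

/-- `n1/m1 < n2/m2` are adjacent terms (a Farey pair) of the extended
Farey sequence of order `K`. -/
def FareyPair (K m1 n1 m2 n2 : ℕ) : Prop :=
  FareyMem K m1 n1 ∧ FareyMem K m2 n2 ∧ n1 * m2 < n2 * m1 ∧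
    ¬∃ m n : ℕ, FareyMem K m n ∧ n1 * m < n * m1 ∧ n * m2 < n2 * m

/-- Let `n1/m1 < n2/m2` be a Farey pair of order `K ≥ 1` with `m1, m2 ≥ 1`,
and let `X, Y > 0` with `n1/m1 < Y/X < n2/m2`.  With `d(m,n) = |X·n − Y·m|`:
if `Y/X` equals the mediant then `d(m1,n1) = d(m2,n2)`; if it is below the
mediant, then `d(m1,n1) < d(m2,n2)`; if above, then `d(m1,n1) > d(m2,n2)`. -/
theorem farey_mediant_distance_comparison (K m1 n1 m2 n2 : ℕ) (hK : 1 ≤ K)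
    (hm1 : 1 ≤ m1) (hm2 : 1 ≤ m2)
    (hpair : FareyPair K m1 n1 m2 n2)
    (X Y : ℝ) (hX : 0 < X) (hY : 0 < Y)
    (hlow : (n1 : ℝ) / m1 < Y / X) (hhigh : Y / X < (n2 : ℝ) / m2) :
    (Y / X = ((n1 : ℝ) + n2) / ((m1 : ℝ) + m2) →
        |X * n1 - Y * m1| = |X * n2 - Y * m2|) ∧
    (Y / X < ((n1 : ℝ) + n2) / ((m1 : ℝ) + m2) →
        |X * n1 - Y * m1| < |X * n2 - Y * m2|) ∧
    (((n1 : ℝ) + n2) / ((m1 : ℝ) + m2) < Y / X →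
        |X * n2 - Y * m2| < |X * n1 - Y * m1|) := by
  have hm1' : (0:ℝ) < m1 := by exact_mod_cast hm1
  have hm2' : (0:ℝ) < m2 := by exact_mod_cast hm2
  have hmm : (0:ℝ) < (m1:ℝ) + m2 := by linarith
  have h1 : X * n1 - Y * m1 < 0 := by
    rw [div_lt_div_iff₀ hm1' hX] at hlow; nlinarith
  have h2 : 0 < X * n2 - Y * m2 := by
    rw [div_lt_div_iff₀ hX hm2'] at hhigh; nlinarith
  rw [abs_of_neg h1, abs_of_pos h2]
  refine ⟨fun h => ?_, fun h => ?_, fun h => ?_⟩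
  · rw [div_eq_div_iff hX.ne' hmm.ne'] at h; nlinarith
  · rw [div_lt_div_iff₀ hX hmm] at h; nlinarith
  · rw [div_lt_div_iff₀ hmm hX] at h; nlinarith
end

section
/- Let K ≥ 2 be an integer and let n2/m2 < n3/m3 be a Farey pair of order K with m2 ≥ 1. Let X, Y > 0 be reals with n2/m2 < Y/X < (n2+n3)/(m2+m3). Then the minimum of |X·n − Y·m| over all coprime pairs (m,n) of nonnegative integers, not both zero, with m ≤ K and n ≤ K equals Y·m2 − X·n2 (in particular it is attained at (m,n) = (m2,n2) and Y·m2 − X·n2 > 0). -/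
lemma coprime_cross_eq {m n m' n' : ℕ} (h : Nat.Coprime m n) (h' : Nat.Coprime m' n')
    (hcross : n * m' = n' * m) : m = m' ∧ n = n' := by
  have h1 : m ∣ m' := by
    have : m ∣ n * m' := ⟨n', by rw [hcross]; ring⟩
    exact (Nat.Coprime.dvd_of_dvd_mul_left h this)
  have h2 : m' ∣ m := by
    have : m' ∣ n' * m := ⟨n, by rw [← hcross]; ring⟩
    exact (Nat.Coprime.dvd_of_dvd_mul_left h' this)
  have hm : m = m' := Nat.dvd_antisymm h1 h2
  rcases Nat.eq_zero_or_pos m with h0 | h0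
  · subst hm; subst h0
    have := Nat.coprime_zero_left n |>.mp h
    have := Nat.coprime_zero_left n' |>.mp h'
    omega
  · refine ⟨hm, ?_⟩
    subst hm
    have : n * m = n' * m := hcross
    exact Nat.eq_of_mul_eq_mul_right h0 this

set_option maxHeartbeats 1000000 in
lemma farey_pair_det (K m2 n2 m3 n3 : ℕ) (hK : 2 ≤ K) (hm2 : 1 ≤ m2)
    (hpair : FareyPair K m2 n2 m3 n3) : n3 * m2 = n2 * m3 + 1 := by
  obtain ⟨⟨hcop2, hnz2, hm2K, hn2K⟩, ⟨hcop3, hnz3, hm3K, hn3K⟩, hlt, hbet⟩ := hpair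
  -- a base solution of n0 * m2 = n2 * m0 + 1 within bounds
  have hex : ∃ m0 n0 : ℕ, n0 * m2 = n2 * m0 + 1 ∧ m0 ≤ K ∧ n0 ≤ K := by
    have hic : IsCoprime (m2:ℤ) (n2:ℤ) := Nat.isCoprime_iff_coprime.mpr hcop2
    obtain ⟨a, b, hab⟩ := hic
    have hm2Z : (0:ℤ) < m2 := by exact_mod_cast hm2
    obtain ⟨u, q, hqu, hu0, hum⟩ :
        ∃ u q : ℤ, (m2:ℤ) * q + u = -b ∧ 0 ≤ u ∧ u < m2 :=
      ⟨(-b) % m2, (-b) / m2, Int.mul_ediv_add_emod (-b) m2,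
        Int.emod_nonneg _ hm2Z.ne', Int.emod_lt_of_pos _ hm2Z⟩
    obtain ⟨v, hkey⟩ : ∃ v : ℤ, v * m2 = 1 + (n2:ℤ) * u :=
      ⟨a - q * n2, by linear_combination hab - (n2:ℤ) * hqu⟩
    have hn2Z : (0:ℤ) ≤ n2 := by positivity
    have hv1 : 1 ≤ v := by nlinarith [mul_nonneg hn2Z hu0]
    have hvK : v ≤ (K:ℤ) := by
      have hKZ : (2:ℤ) ≤ K := by exact_mod_cast hK
      rcases Nat.eq_zero_or_pos n2 with h0 | h1
      · have : (n2:ℤ) = 0 := by exact_mod_cast h0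
        rw [this] at hkey
        nlinarith
      · have h1Z : (1:ℤ) ≤ n2 := by exact_mod_cast h1
        have hn2KZ : (n2:ℤ) ≤ K := by exact_mod_cast hn2K
        nlinarith [mul_le_mul_of_nonneg_left (show u ≤ (m2:ℤ) - 1 by linarith) hn2Z]
    refine ⟨u.toNat, v.toNat, ?_, ?_, ?_⟩
    · have h1 : (u.toNat:ℤ) = u := Int.toNat_of_nonneg hu0
      have h2 : (v.toNat:ℤ) = v := Int.toNat_of_nonneg (by linarith)
      have : (v.toNat:ℤ) * m2 = n2 * u.toNat + 1 := by rw [h1, h2]; linarith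
      exact_mod_cast this
    · have : (u.toNat:ℤ) ≤ K := by
        rw [Int.toNat_of_nonneg hu0]
        have : (m2:ℤ) ≤ K := by exact_mod_cast hm2K
        linarith
      exact_mod_cast this
    · have : (v.toNat:ℤ) ≤ K := by rw [Int.toNat_of_nonneg (by linarith)]; exact hvK
      exact_mod_cast this
  obtain ⟨m0, n0, hbase, hm0K, hn0K⟩ := hex
  -- push the solution as high as possible
  have hex2 : ∃ m n : ℕ, n * m2 = n2 * m + 1 ∧ m ≤ K ∧ n ≤ K ∧
      ¬(m + m2 ≤ K ∧ n + n2 ≤ K) := by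
    classical
    let P : ℕ → Prop := fun t => m0 + t * m2 ≤ K ∧ n0 + t * n2 ≤ K
    have hP0 : P 0 := ⟨by simpa using hm0K, by simpa using hn0K⟩
    obtain ⟨hPt⟩ : Nonempty (PLift (P (Nat.findGreatest P K))) :=
      ⟨⟨Nat.findGreatest_spec (Nat.zero_le K) hP0⟩⟩
    set t := Nat.findGreatest P K with ht
    refine ⟨m0 + t * m2, n0 + t * n2, by rw [add_mul, hbase]; ring, hPt.down.1, hPt.down.2, ?_⟩
    rintro ⟨hA, hB⟩
    have htm : t ≤ t * m2 := Nat.le_mul_of_pos_right _ hm2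
    have ht1 : t + 1 ≤ K := by omega
    have hng := Nat.findGreatest_is_greatest (n := K) (P := P)
      (show t < t + 1 by omega) ht1
    exact hng ⟨by rw [Nat.succ_mul]; omega, by rw [Nat.succ_mul]; omega⟩
  obtain ⟨m, n, hrel, hmK, hnK, hmax⟩ := hex2
  have hn1 : 1 ≤ n := by
    rcases Nat.eq_zero_or_pos n with h0 | h1
    · rw [h0] at hrel; simp at hrel
    · exact h1
  have hcopmn : Nat.Coprime m n := by
    have hg1 : Nat.gcd m n ∣ n * m2 := Dvd.dvd.mul_right (Nat.gcd_dvd_right m n) m2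
    have hg2 : Nat.gcd m n ∣ n2 * m := Dvd.dvd.mul_left (Nat.gcd_dvd_left m n) n2
    have : Nat.gcd m n ∣ 1 := by
      have := Nat.dvd_sub hg1 hg2
      rwa [show n * m2 - n2 * m = 1 by omega] at this
    exact Nat.dvd_one.mp this
  have hmem : FareyMem K m n := ⟨hcopmn, fun h => by omega, hmK, hnK⟩
  have h23 : ¬ (n * m3 < n3 * m) := by
    intro h
    exact hbet ⟨m, n, hmem, by omega, h⟩
  have h32 : n * m3 ≤ n3 * m := by
    by_contra hcon
    push_neg at hcon
    have hrelZ : (n:ℤ) * m2 - (n2:ℤ) * m = 1 := by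
      have h' : (n:ℤ) * m2 = (n2:ℤ) * m + 1 := by exact_mod_cast hrel
      linarith
    have hconZ : (n3:ℤ) * m + 1 ≤ (n:ℤ) * m3 := by exact_mod_cast hcon
    have hltZ : (n2:ℤ) * m3 + 1 ≤ (n3:ℤ) * m2 := by exact_mod_cast hlt
    have hid_m : (m3:ℤ) = (m2:ℤ) * ((n:ℤ)*m3 - (n3:ℤ)*m) + (m:ℤ) * ((n3:ℤ)*m2 - (n2:ℤ)*m3) := by
      linear_combination (-(m3:ℤ)) * hrelZ
    have hid_n : (n3:ℤ) = (n2:ℤ) * ((n:ℤ)*m3 - (n3:ℤ)*m) + (n:ℤ) * ((n3:ℤ)*m2 - (n2:ℤ)*m3) := by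
      linear_combination (-(n3:ℤ)) * hrelZ
    have hmZ : (0:ℤ) ≤ m := by positivity
    have hnZ : (0:ℤ) ≤ n := by positivity
    have hn2Z' : (0:ℤ) ≤ n2 := by positivity
    have hm2Z' : (0:ℤ) ≤ m2 := by positivity
    have p1 : (0:ℤ) ≤ (m2:ℤ) * ((n:ℤ)*m3 - (n3:ℤ)*m - 1) := mul_nonneg hm2Z' (by linarith)
    have p2 : (0:ℤ) ≤ (m:ℤ) * ((n3:ℤ)*m2 - (n2:ℤ)*m3 - 1) := mul_nonneg hmZ (by linarith)
    have p3 : (0:ℤ) ≤ (n2:ℤ) * ((n:ℤ)*m3 - (n3:ℤ)*m - 1) := mul_nonneg hn2Z' (by linarith)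
    have p4 : (0:ℤ) ≤ (n:ℤ) * ((n3:ℤ)*m2 - (n2:ℤ)*m3 - 1) := mul_nonneg hnZ (by linarith)
    have e1 : (m:ℤ) + m2 ≤ m3 := by linarith [hid_m, p1, p2]
    have e2 : (n:ℤ) + n2 ≤ n3 := by linarith [hid_n, p3, p4]
    have e1' : m + m2 ≤ m3 := by exact_mod_cast e1
    have e2' : n + n2 ≤ n3 := by exact_mod_cast e2
    exact hmax ⟨le_trans e1' hm3K, le_trans e2' hn3K⟩
  have heq : n * m3 = n3 * m := le_antisymm h32 (by omega)
  obtain ⟨hm', hn'⟩ := coprime_cross_eq hcopmn hcop3 heq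
  rw [← hm', ← hn']
  omega

/-- Let `n2/m2 < n3/m3` be a Farey pair of order `K ≥ 2` with `m2 ≥ 1`, and let
`X, Y > 0` with `n2/m2 < Y/X < (n2+n3)/(m2+m3)`.  Then the minimum of
`|X·n − Y·m|` over all coprime pairs `(m,n)` of nonnegative integers, not both
zero, with `m ≤ K` and `n ≤ K` equals `Y·m2 − X·n2`, attained at `(m2,n2)`,
and this value is positive. -/
theorem farey_min_dist_lower_half (K m2 n2 m3 n3 : ℕ) (hK : 2 ≤ K) (hm2 : 1 ≤ m2)
    (hpair : FareyPair K m2 n2 m3 n3)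
    (X Y : ℝ) (hX : 0 < X) (hY : 0 < Y)
    (hlow : (n2 : ℝ) / m2 < Y / X)
    (hhigh : Y / X < ((n2 : ℝ) + n3) / ((m2 : ℝ) + m3)) :
    IsLeast {d : ℝ | ∃ m n : ℕ, Nat.Coprime m n ∧ ¬(m = 0 ∧ n = 0) ∧
        m ≤ K ∧ n ≤ K ∧ d = |X * n - Y * m|} (Y * m2 - X * n2) ∧
    0 < Y * m2 - X * n2 := by
  have hdet : n3 * m2 = n2 * m3 + 1 := farey_pair_det K m2 n2 m3 n3 hK hm2 hpair
  obtain ⟨⟨hcop2, hnz2, hm2K, hn2K⟩, ⟨hcop3, hnz3, hm3K, hn3K⟩, hlt, hbet⟩ := hpair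
  have hm2R : (0:ℝ) < m2 := by exact_mod_cast hm2
  have hm23R : (0:ℝ) < (m2:ℝ) + m3 := by positivity
  have h1 : (n2:ℝ) * X < Y * m2 := (div_lt_div_iff₀ hm2R hX).mp hlow
  have h2 : Y * ((m2:ℝ) + m3) < ((n2:ℝ) + n3) * X := (div_lt_div_iff₀ hX hm23R).mp hhigh
  have hdetR : (n3:ℝ) * m2 = (n2:ℝ) * m3 + 1 := by exact_mod_cast hdet
  have hpos : 0 < Y * m2 - X * n2 := by linarith
  -- ε * (m2 + m3) < X
  have hXeps : (Y * m2 - X * n2) * ((m2:ℝ) + m3) < X := by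
    nlinarith [mul_lt_mul_of_pos_right h2 hm2R]
  have hL3 : Y * m2 - X * n2 < X * n3 - Y * m3 := by linarith
  refine ⟨⟨⟨m2, n2, hcop2, hnz2, hm2K, hn2K, ?_⟩, ?_⟩, hpos⟩
  · rw [abs_of_neg (by linarith)]; ring
  · rintro d ⟨m, n, hcop, hnz, hmK, hnK, rfl⟩
    have hmR : (0:ℝ) ≤ m := by positivity
    have hnR : (0:ℝ) ≤ n := by positivity
    have hm3R : (0:ℝ) ≤ m3 := by positivity
    rcases lt_trichotomy (n * m2) (n2 * m) with hB | hA | hC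
    · -- n/m < n2/m2
      have hm1 : 1 ≤ m := by
        rcases Nat.eq_zero_or_pos m with h0 | h1
        · rw [h0] at hB; simp at hB
        · exact h1
      have hm1R : (1:ℝ) ≤ m := by exact_mod_cast hm1
      have hBR : (n:ℝ) * m2 + 1 ≤ (n2:ℝ) * m := by exact_mod_cast hB
      have key : Y * m2 - X * n2 < Y * m - X * n := by
        nlinarith [mul_lt_mul_of_pos_right h1 (show (0:ℝ) < m by linarith)]
      rw [abs_sub_comm]
      exact le_trans key.le (le_abs_self _)
    · -- same fraction: (m, n) = (m2, n2)
      obtain ⟨hm', hn'⟩ := coprime_cross_eq hcop hcop2 hA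
      subst hm'; subst hn'
      rw [abs_of_neg (by linarith)]
      linarith
    · rcases lt_trichotomy (n * m3) (n3 * m) with hD | hE | hF
      · exact absurd ⟨m, n, ⟨hcop, hnz, hmK, hnK⟩, hC, hD⟩ hbet
      · -- (m, n) = (m3, n3)
        obtain ⟨hm', hn'⟩ := coprime_cross_eq hcop hcop3 hE
        subst hm'; subst hn'
        rw [abs_of_pos (by linarith)]
        linarith
      · -- n/m > n3/m3
        have hCR : (n2:ℝ) * m + 1 ≤ (n:ℝ) * m2 := by exact_mod_cast hC
        have hFR : (n3:ℝ) * m + 1 ≤ (n:ℝ) * m3 := by exact_mod_cast hF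
        have key : Y * m2 - X * n2 < X * n - Y * m := by
          nlinarith [mul_le_mul_of_nonneg_right h2.le hmR]
        exact le_trans key.le (le_abs_self _)
end

section
/- Let K ≥ 2 be an integer and let n2/m2 < n3/m3 be a Farey pair of order K with m2 ≥ 1. Let X, Y > 0 be reals with (n2+n3)/(m2+m3) < Y/X < n3/m3 (if m3 = 0 the upper constraint is vacuous). Then the minimum of |X·n − Y·m| over all coprime pairs (m,n) of nonnegative integers, not both zero, with m ≤ K and n ≤ K equals X·n3 − Y·m3 (in particular it is attained at (m,n) = (m3,n3) and X·n3 − Y·m3 > 0). -/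
/-!
Write `v₂ = (m₂, n₂)`, `v₃ = (m₃, n₃)` and `D = n₃ m₂ - n₂ m₃`. Neighbours in the Farey sequence of
order `K` have `D = 1`: otherwise shifting a Bézout partner `p` of `v₂` by multiples of `v₂` makes
`D p = s v₂ + v₃` with `0 < s < D`, a fraction of order `K` strictly between `v₂` and `v₃`.
Hence every `(m, n)` equals `a v₂ + b v₃` with integers `a, b`; adjacency excludes `a, b ≥ 1` and
nonnegativity excludes `a, b ≤ 0`. The linear form `L(m, n) = X n - Y m` takes the values `-u` at
`v₂` and `v` at `v₃` with `0 < v < u`, so in the remaining cases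
`|L(a v₂ + b v₃)| = |b v - a u| ≥ v = L(v₃)`.
-/

theorem det_mul_eq_cramer {R : Type*} [CommRing R] (m2 n2 m3 n3 m n : R) :
    (n3 * m2 - n2 * m3) * m = (n3 * m - m3 * n) * m2 + (n * m2 - m * n2) * m3 ∧
      (n3 * m2 - n2 * m3) * n = (n3 * m - m3 * n) * n2 + (n * m2 - m * n2) * n3 :=
  ⟨by ring, by ring⟩

theorem exists_det_eq_one_of_isCoprime {m2 n2 m3 n3 : ℤ} (h2 : IsCoprime m2 n2)
    (h3 : IsCoprime m3 n3) (hD : 2 ≤ n3 * m2 - n2 * m3) :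
    ∃ m n : ℤ, n * m2 - m * n2 = 1 ∧ 0 < n3 * m - m3 * n ∧
      n3 * m - m3 * n < n3 * m2 - n2 * m3 := by
  obtain ⟨u, w, huw⟩ := h2
  set D := n3 * m2 - n2 * m3
  have hD0 : 0 < D := by omega
  set c := n3 * -w - m3 * u
  set k := toIocDiv hD0 0 c
  have hs : c - k * D ∈ Set.Ioc 0 D := by
    simpa [← self_sub_toIocDiv_zsmul hD0 0 c] using toIocMod_mem_Ioc hD0 0 c
  refine ⟨-w - k * m2, u - k * n2, by linear_combination huw, ?_⟩
  have hdet : n3 * (-w - k * m2) - m3 * (u - k * n2) = c - k * D := by ring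
  rw [hdet]
  refine ⟨hs.1, lt_of_le_of_ne hs.2 fun hsD => ?_⟩
  -- `s = D` would give `D (p - v₂) = v₃`, so `D` would divide the coprime pair `v₃`.
  obtain ⟨hm, hn⟩ := det_mul_eq_cramer m2 n2 m3 n3 (-w - k * m2) (u - k * n2)
  rw [hdet, hsD] at hm hn
  have hunit : IsUnit D := h3.isUnit_of_dvd'
    ⟨-w - k * m2 - m2, by linear_combination -hm - m3 * huw⟩
    ⟨u - k * n2 - n2, by linear_combination -hn - n3 * huw⟩
  rcases Int.isUnit_iff.mp hunit with h | h <;> omega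

theorem exists_isCoprime_between_of_two_le_det {K m2 n2 m3 n3 : ℤ} (h2 : IsCoprime m2 n2)
    (h3 : IsCoprime m3 n3) (hm2 : m2 ∈ Set.Icc 0 K) (hn2 : n2 ∈ Set.Icc 0 K)
    (hm3 : m3 ∈ Set.Icc 0 K) (hn3 : n3 ∈ Set.Icc 0 K) (hD : 2 ≤ n3 * m2 - n2 * m3) :
    ∃ m n : ℤ, IsCoprime m n ∧ m ∈ Set.Icc 0 K ∧ n ∈ Set.Icc 0 K ∧
      n2 * m < n * m2 ∧ n * m3 < n3 * m := by
  obtain ⟨m, n, hb, hs0, hsD⟩ := exists_det_eq_one_of_isCoprime h2 h3 hD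
  obtain ⟨hm, hn⟩ := det_mul_eq_cramer m2 n2 m3 n3 m n
  rw [hb, one_mul] at hm hn
  set D := n3 * m2 - n2 * m3
  set s := n3 * m - m3 * n
  have hD0 : 0 < D := by omega
  have bound {x2 x3 x : ℤ} (hx2 : x2 ∈ Set.Icc 0 K) (hx3 : x3 ∈ Set.Icc 0 K)
      (hx : D * x = s * x2 + x3) : x ∈ Set.Icc 0 K := by
    refine ⟨nonneg_of_mul_nonneg_right (a := D) ?_ hD0, le_of_mul_le_mul_left ?_ hD0⟩
    · rw [hx]; nlinarith [hx2.1, hx3.1]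
    · rw [hx]; nlinarith [hx2.2, hx3.2, hx2.1]
  exact ⟨m, n, ⟨-n2, m2, by linear_combination hb⟩, bound hm2 hm3 hm, bound hn2 hn3 hn,
    by linarith, by linarith⟩

theorem fareyMem_iff_isCoprime {K m n : ℕ} :
    FareyMem K m n ↔ IsCoprime (m : ℤ) n ∧ (m : ℤ) ≤ K ∧ (n : ℤ) ≤ K := by
  rw [FareyMem, Nat.isCoprime_iff_coprime, Nat.cast_le, Nat.cast_le]
  refine ⟨fun ⟨h, _, hm, hn⟩ => ⟨h, hm, hn⟩, fun ⟨h, hm, hn⟩ => ⟨h, ?_, hm, hn⟩⟩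
  rintro ⟨rfl, rfl⟩
  simp at h

namespace FareyPair

variable {K m2 n2 m3 n3 : ℕ}

theorem det_eq_one (h : FareyPair K m2 n2 m3 n3) : (n3 : ℤ) * m2 - n2 * m3 = 1 := by
  obtain ⟨hmem2, hmem3, hlt, hno⟩ := h
  rw [fareyMem_iff_isCoprime] at hmem2 hmem3
  have hlt' : (n2 : ℤ) * m3 < n3 * m2 := by exact_mod_cast hlt
  by_contra hne
  obtain ⟨m, n, hcop, ⟨hm0, hmK⟩, ⟨hn0, hnK⟩, hlo, hhi⟩ :=
    exists_isCoprime_between_of_two_le_det hmem2.1 hmem3.1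
      ⟨by positivity, hmem2.2.1⟩ ⟨by positivity, hmem2.2.2⟩
      ⟨by positivity, hmem3.2.1⟩ ⟨by positivity, hmem3.2.2⟩ (by omega)
  lift m to ℕ using hm0
  lift n to ℕ using hn0
  exact hno ⟨m, n, fareyMem_iff_isCoprime.mpr ⟨hcop, hmK, hnK⟩,
    by exact_mod_cast hlo, by exact_mod_cast hhi⟩

/-- The two expressions are the coordinates `a`, `b` of `(m, n) = a v₂ + b v₃`. -/
theorem coords_cases (h : FareyPair K m2 n2 m3 n3) {m n : ℕ} (hmem : FareyMem K m n) :
    ((n3 : ℤ) * m - m3 * n ≤ 0 ∧ 1 ≤ (n : ℤ) * m2 - m * n2) ∨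
      (1 ≤ (n3 : ℤ) * m - m3 * n ∧ (n : ℤ) * m2 - m * n2 ≤ 0) := by
  obtain ⟨hm, hn⟩ := det_mul_eq_cramer (m2 : ℤ) n2 m3 n3 m n
  rw [h.det_eq_one, one_mul] at hm hn
  set a := (n3 : ℤ) * m - m3 * n
  set b := (n : ℤ) * m2 - m * n2
  have not_both_pos : ¬(1 ≤ a ∧ 1 ≤ b) := fun ⟨ha, hb⟩ =>
    h.2.2.2 ⟨m, n, hmem, by zify; linarith, by zify; linarith⟩
  have not_both_nonpos : ¬(a ≤ 0 ∧ b ≤ 0) := fun ⟨ha, hb⟩ => by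
    have hm0 : (m : ℤ) ≤ 0 := by
      rw [hm]; nlinarith [Int.natCast_nonneg m2, Int.natCast_nonneg m3]
    have hn0 : (n : ℤ) ≤ 0 := by
      rw [hn]; nlinarith [Int.natCast_nonneg n2, Int.natCast_nonneg n3]
    exact hmem.2.1 ⟨by omega, by omega⟩
  omega

end FareyPair

theorem le_abs_mul_sub_mul {u v a b : ℝ} (hv : 0 ≤ v) (hvu : v ≤ u)
    (hab : (a ≤ 0 ∧ 1 ≤ b) ∨ (1 ≤ a ∧ b ≤ 0)) : v ≤ |b * v - a * u| := by
  rcases hab with ⟨ha, hb⟩ | ⟨ha, hb⟩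
  · exact le_abs.mpr (Or.inl (by nlinarith))
  · exact le_abs.mpr (Or.inr (by nlinarith))

theorem farey_min_dist_upper_half_general (K m2 n2 m3 n3 : ℕ)
    (hpair : FareyPair K m2 n2 m3 n3)
    (X Y : ℝ)
    (hlow : X * ((n2 : ℝ) + n3) < Y * ((m2 : ℝ) + m3))
    (hhigh : Y * (m3 : ℝ) < X * (n3 : ℝ)) :
    IsLeast {d : ℝ | ∃ m n : ℕ, Nat.Coprime m n ∧ ¬(m = 0 ∧ n = 0) ∧
        m ≤ K ∧ n ≤ K ∧ d = |X * n - Y * m|} (X * n3 - Y * m3) ∧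
    0 < X * n3 - Y * m3 := by
  have hv : 0 < X * n3 - Y * m3 := by linarith
  have hdet : (n3 : ℝ) * m2 - n2 * m3 = 1 := by exact_mod_cast hpair.det_eq_one
  obtain ⟨hcop3, hne3, hm3K, hn3K⟩ := hpair.2.1
  refine ⟨⟨⟨m3, n3, hcop3, hne3, hm3K, hn3K, (abs_of_pos hv).symm⟩, ?_⟩, hv⟩
  rintro _ ⟨m, n, hcop, hne, hmK, hnK, rfl⟩
  have hab := hpair.coords_cases ⟨hcop, hne, hmK, hnK⟩
  have hdecomp : X * n - Y * m = ((n * m2 - m * n2 : ℤ) : ℝ) * (X * n3 - Y * m3)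
      - ((n3 * m - m3 * n : ℤ) : ℝ) * (Y * m2 - X * n2) := by
    push_cast
    linear_combination (-(X * n - Y * m)) * hdet
  rw [hdecomp]
  exact le_abs_mul_sub_mul hv.le (by linarith) (by exact_mod_cast hab)

/-- Let `n2/m2 < n3/m3` be a Farey pair of order `K ≥ 2` with `m2 ≥ 1`, and let
`X, Y > 0` with `(n2+n3)/(m2+m3) < Y/X < n3/m3`, the constraints being stated
in cross-multiplied form so that the upper one is vacuous when `m3 = 0`.
Then the minimum of `|X·n − Y·m|` over all coprime pairs `(m,n)` of nonnegative
integers, not both zero, with `m ≤ K` and `n ≤ K` equals `X·n3 − Y·m3`,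
attained at `(m3,n3)`, and this value is positive. -/
theorem farey_min_dist_upper_half (K m2 n2 m3 n3 : ℕ) (hK : 2 ≤ K) (hm2 : 1 ≤ m2)
    (hpair : FareyPair K m2 n2 m3 n3)
    (X Y : ℝ) (hX : 0 < X) (hY : 0 < Y)
    (hlow : X * ((n2 : ℝ) + n3) < Y * ((m2 : ℝ) + m3))
    (hhigh : Y * (m3 : ℝ) < X * (n3 : ℝ)) :
    IsLeast {d : ℝ | ∃ m n : ℕ, Nat.Coprime m n ∧ ¬(m = 0 ∧ n = 0) ∧
        m ≤ K ∧ n ≤ K ∧ d = |X * n - Y * m|} (X * n3 - Y * m3) ∧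
    0 < X * n3 - Y * m3 :=
  farey_min_dist_upper_half_general K m2 n2 m3 n3 hpair X Y hlow hhigh
end

section
/- Assume h21/h22 ≤ b + b' and h11/h21 ≥ √p2·(a+a')/(√p1·(b+b')). Then the supremum of f(w1,w2) over the interval-restricted feasible set D equals (h21/(b+b'))·W2, and it is attained at (w1,w2) = ( ((a+a')·h21/((b+b')·h11))·W2 , W2 ). -/
/-- The minimum Euclidean half-distance at receiver 1: the minimum of
`|h11·w1·n − h21·w2·m|` over integer pairs `(m,n) ≠ (0,0)` with
`|m| ≤ M−1` and `|n| ≤ M−1`. -/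
noncomputable def minDist1 (M : ℕ) (h11 h21 w1 w2 : ℝ) : ℝ :=
  sInf {d : ℝ | ∃ m n : ℤ, (m, n) ≠ (0, 0) ∧ |m| ≤ (M : ℤ) - 1 ∧ |n| ≤ (M : ℤ) - 1 ∧
      d = |h11 * w1 * n - h21 * w2 * m|}

/-- The smaller of the two receivers minimum Euclidean half-distances. -/
noncomputable def f (M : ℕ) (h11 h21 h22 w1 w2 : ℝ) : ℝ :=
  min (minDist1 M h11 h21 w1 w2) (h22 * w2)

/-- `b/a < b'/a'` is a Farey pair of order `K` (numerators `b, b'`,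
denominators `a, a'`): `a ≥ 1`, `b' ≥ 1`, the pairs are coprime, all entries
are at most `K`, `b·a' < b'·a`, and no coprime pair `(m,n)` of nonnegative
integers, not both zero, with `m ≤ K`, `n ≤ K` satisfies `b·m < n·a` and
`n·a' < b'·m`. -/
def FareyPairOrd (K a b a2 b2 : ℕ) : Prop :=
  1 ≤ a ∧ 1 ≤ b2 ∧ Nat.Coprime a b ∧ Nat.Coprime a2 b2 ∧
  a ≤ K ∧ b ≤ K ∧ a2 ≤ K ∧ b2 ≤ K ∧ b * a2 < b2 * a ∧
  ¬∃ m n : ℕ, Nat.Coprime m n ∧ ¬(m = 0 ∧ n = 0) ∧ m ≤ K ∧ n ≤ K ∧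
    b * m < n * a ∧ n * a2 < b2 * m

/-- The interval-restricted feasible set: `0 < w1 ≤ W1`, `0 < w2 ≤ W2`, and
`b/a < h21·w2/(h11·w1) ≤ b'/a'` in cross-multiplied form. -/
def Feas (W1 W2 h11 h21 : ℝ) (a b a2 b2 : ℕ) (w1 w2 : ℝ) : Prop :=
  0 < w1 ∧ w1 ≤ W1 ∧ 0 < w2 ∧ w2 ≤ W2 ∧
  (b : ℝ) * h11 * w1 < (a : ℝ) * h21 * w2 ∧
  (a2 : ℝ) * h21 * w2 ≤ (b2 : ℝ) * h11 * w1

/-!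
Farey neighbours satisfy `a * b2 - a2 * b = 1`. Hence their mediant `(a + a2, b + b2)` is
coprime, and since it lies strictly between them it has an entry larger than `M - 1`, so no
admissible `(m, n) ≠ 0` is proportional to it. At the point where `h21 w2 / (h11 w1)` equals the
mediant, every distance `|h11 w1 n - h21 w2 m|` is therefore a nonzero integer multiple of
`h21 w2 / (b + b2)`, and the multiple is 1 at `(a2, b2)`. Conversely, anywhere on the interval,
the distances to `(a, b)` and `(a2, b2)`, weighted by `b2` and `b`, add up to `h21 w2` by the
determinant identity, so `minDist1 ≤ h21 w2 / (b + b2) ≤ h21 W2 / (b + b2)`. The condition on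
`h11 / h21` makes the mediant point respect `w1 ≤ W1`, and the one on `h21 / h22` keeps
`h22 w2` from being the smaller term of `f`.
-/

theorem Int.le_max_of_mul_eq_mul_add {d m x y e : ℤ} (h : d * m = x * e + y) (he : 0 ≤ e)
    (hed : e < d) (hx : 0 ≤ x) : m ≤ max x y := by
  have hxm := le_max_left x y
  have hym := le_max_right x y
  by_contra! hlt
  nlinarith

theorem Int.exists_mul_sub_eq_one_of_isCoprime {a b a2 b2 : ℤ} (hcop : IsCoprime a2 b2)
    (hd : 0 < a * b2 - a2 * b) :
    ∃ m n : ℤ, b2 * m - a2 * n = 1 ∧ 0 < a * n - b * m ∧ a * n - b * m ≤ a * b2 - a2 * b := by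
  obtain ⟨u, v, huv⟩ := hcop
  obtain ⟨q, r, hqr, hr0, hrd⟩ : ∃ q r : ℤ,
      a * -u - b * v - 1 = (a * b2 - a2 * b) * q + r ∧ 0 ≤ r ∧ r < a * b2 - a2 * b :=
    ⟨_, _, (Int.mul_ediv_add_emod _ _).symm, Int.emod_nonneg _ hd.ne', Int.emod_lt_of_pos _ hd⟩
  -- shifting the Bézout pair `(v, -u)` by `q • (a2, b2)` moves `a * n - b * m`
  -- into `[1, a * b2 - a2 * b]`
  have he : a * (-u - q * b2) - b * (v - q * a2) = r + 1 := by linear_combination hqr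
  exact ⟨v - q * a2, -u - q * b2, by linear_combination huv, by omega, by omega⟩

namespace FareyPairOrd

variable {K a b a2 b2 : ℕ}

theorem det_eq_one (h : FareyPairOrd K a b a2 b2) : (a : ℤ) * b2 - a2 * b = 1 := by
  obtain ⟨ha, -, hab, ha2b2, haK, hbK, ha2K, hb2K, hlt, hno⟩ := h
  have hd : 0 < (a : ℤ) * b2 - a2 * b := by zify at hlt; linarith
  obtain ⟨m, n, h1, he, hed⟩ := Int.exists_mul_sub_eq_one_of_isCoprime
    (Nat.isCoprime_iff_coprime.mpr ha2b2) hd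
  by_contra hne
  -- if `d = a * b2 - a2 * b ≥ 2` and `e = a * n - b * m < d`, then
  -- `(m, n) = (e • (a2, b2) + (a, b)) / d` lies strictly between the pair, with entries `≤ K`
  have hdm : ((a : ℤ) * b2 - a2 * b) * m = a2 * (a * n - b * m) + a := by
    linear_combination (a : ℤ) * h1
  have hdn : ((a : ℤ) * b2 - a2 * b) * n = b2 * (a * n - b * m) + b := by
    linear_combination (b : ℤ) * h1
  generalize (a : ℤ) * b2 - a2 * b = d at hd hne hed hdm hdn
  generalize hE : (a : ℤ) * n - b * m = e at he hed hdm hdn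
  have hed' : e < d := by
    refine lt_of_le_of_ne hed fun hde => hne ?_
    have hunit := (Nat.isCoprime_iff_coprime.mpr hab).isUnit_of_dvd' (x := d)
      ⟨m - a2, by linear_combination -hdm - (a2 : ℤ) * hde⟩
      ⟨n - b2, by linear_combination -hdn - (b2 : ℤ) * hde⟩
    rcases Int.isUnit_iff.mp hunit with h | h <;> omega
  have hm : 0 < m := by nlinarith
  have hn : 0 ≤ n := by nlinarith
  have hmK := Int.le_max_of_mul_eq_mul_add hdm he.le hed' (by positivity)
  have hnK := Int.le_max_of_mul_eq_mul_add hdn he.le hed' (by positivity)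
  lift m to ℕ using hm.le
  lift n to ℕ using hn
  refine hno ⟨m, n, Nat.isCoprime_iff_coprime.mp ⟨b2, -a2, by linear_combination h1⟩,
    by omega, ?_, ?_, ?_, ?_⟩
  · omega
  · omega
  · zify; linarith
  · zify; linarith

theorem isCoprime_mediant (h : FareyPairOrd K a b a2 b2) :
    IsCoprime ((a : ℤ) + a2) ((b : ℤ) + b2) :=
  ⟨b2, -a2, by linear_combination h.det_eq_one⟩

/-- The mediant lies strictly between the pair, so it cannot have entries `≤ K`. -/
theorem lt_mediant (h : FareyPairOrd K a b a2 b2) : K < a + a2 ∨ K < b + b2 := by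
  have hcop := h.isCoprime_mediant
  obtain ⟨ha, -, -, -, -, -, -, -, hlt, hno⟩ := h
  by_contra! hle
  refine hno ⟨a + a2, b + b2, Nat.isCoprime_iff_coprime.mp (by exact_mod_cast hcop), by omega,
    hle.1, hle.2, by nlinarith, by nlinarith⟩

theorem mediant_mul_sub_ne_zero (h : FareyPairOrd K a b a2 b2) {m n : ℤ} (hmn : (m, n) ≠ (0, 0))
    (hm : |m| ≤ K) (hn : |n| ≤ K) : ((a : ℤ) + a2) * n - ((b : ℤ) + b2) * m ≠ 0 := by
  intro heq
  have hA : (0 : ℤ) < a + a2 := by have := h.1; positivity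
  have hAm : (a + a2 : ℤ) ∣ m :=
    h.isCoprime_mediant.dvd_of_dvd_mul_left ⟨n, by linear_combination -heq⟩
  obtain ⟨k, rfl⟩ := hAm
  obtain rfl : n = (b + b2) * k := mul_left_cancel₀ hA.ne' (by linear_combination heq)
  have hk : k ≠ 0 := by rintro rfl; simp at hmn
  have hk1 : 1 ≤ |k| := Int.one_le_abs hk
  rw [abs_mul, abs_of_pos hA] at hm
  rw [abs_mul, abs_of_nonneg (by positivity)] at hn
  rcases h.lt_mediant with hK | hK <;> nlinarith

end FareyPairOrd

section minDist1

variable {M : ℕ} {h11 h21 w1 w2 : ℝ}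

theorem minDist1_le {m n : ℤ} (hmn : (m, n) ≠ (0, 0)) (hm : |m| ≤ (M : ℤ) - 1)
    (hn : |n| ≤ (M : ℤ) - 1) : minDist1 M h11 h21 w1 w2 ≤ |h11 * w1 * n - h21 * w2 * m| :=
  csInf_le ⟨0, by rintro _ ⟨_, _, -, -, -, rfl⟩; exact abs_nonneg _⟩ ⟨m, n, hmn, hm, hn, rfl⟩

theorem le_minDist1 {c : ℝ} (hM : 2 ≤ M)
    (h : ∀ m n : ℤ, (m, n) ≠ (0, 0) → |m| ≤ (M : ℤ) - 1 → |n| ≤ (M : ℤ) - 1 →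
      c ≤ |h11 * w1 * n - h21 * w2 * m|) :
    c ≤ minDist1 M h11 h21 w1 w2 :=
  le_csInf ⟨_, 1, 0, by simp, by simp; omega, by simp; omega, rfl⟩
    (by rintro _ ⟨m, n, hmn, hm, hn, rfl⟩; exact h m n hmn hm hn)

variable {a b a2 b2 : ℕ}

/-- Test the endpoints `(a, b)` and `(a2, b2)` and combine with weights `b2` and `b`. -/
theorem FareyPairOrd.mul_minDist1_le (h : FareyPairOrd (M - 1) a b a2 b2)
    (hlo : (b : ℝ) * h11 * w1 ≤ a * h21 * w2) (hhi : (a2 : ℝ) * h21 * w2 ≤ b2 * h11 * w1) :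
    ((b : ℝ) + b2) * minDist1 M h11 h21 w1 w2 ≤ h21 * w2 := by
  have hdet : (a : ℝ) * b2 - a2 * b = 1 := by exact_mod_cast h.det_eq_one
  obtain ⟨ha, hb2, -, -, haK, hbK, ha2K, hb2K, -⟩ := h
  have h1 : minDist1 M h11 h21 w1 w2 ≤ |h11 * w1 * (b : ℤ) - h21 * w2 * (a : ℤ)| :=
    minDist1_le (by simp; omega) (by simp; omega) (by simp; omega)
  have h2 : minDist1 M h11 h21 w1 w2 ≤ |h11 * w1 * (b2 : ℤ) - h21 * w2 * (a2 : ℤ)| :=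
    minDist1_le (by simp; omega) (by simp; omega) (by simp; omega)
  push_cast at h1 h2
  rw [abs_of_nonpos (by linarith)] at h1
  rw [abs_of_nonneg (by linarith)] at h2
  have hdet' : ((a : ℝ) * b2 - a2 * b) * (h21 * w2) = h21 * w2 := by rw [hdet, one_mul]
  linarith [mul_le_mul_of_nonneg_left h1 b2.cast_nonneg, mul_le_mul_of_nonneg_left h2 b.cast_nonneg]

theorem FareyPairOrd.minDist1_eq (h : FareyPairOrd (M - 1) a b a2 b2) (hM : 2 ≤ M)
    (hh21 : 0 < h21) (hw2 : 0 < w2) (hw1 : h11 * w1 * (b + b2) = (a + a2) * h21 * w2) :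
    minDist1 M h11 h21 w1 w2 = h21 / (b + b2) * w2 := by
  have hS : (0 : ℝ) < b + b2 := by have := h.2.1; positivity
  have key (m n : ℤ) : |h11 * w1 * n - h21 * w2 * m| =
      h21 / (b + b2) * w2 * |((((a : ℤ) + a2) * n - ((b : ℤ) + b2) * m : ℤ) : ℝ)| := by
    rw [← abs_of_pos (by positivity : 0 < h21 / (b + b2) * w2), ← abs_mul]
    congr 1
    field_simp
    push_cast
    linear_combination (n : ℝ) * hw1
  apply le_antisymm
  · have hdet : ((a : ℤ) + a2) * b2 - ((b : ℤ) + b2) * a2 = 1 := by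
      linear_combination h.det_eq_one
    obtain ⟨-, hb2, -, -, -, -, ha2K, hb2K, -⟩ := h
    calc minDist1 M h11 h21 w1 w2 ≤ |h11 * w1 * (b2 : ℤ) - h21 * w2 * (a2 : ℤ)| :=
          minDist1_le (by simp; omega) (by simp; omega) (by simp; omega)
      _ = h21 / (b + b2) * w2 := by rw [key, hdet]; simp
  · refine le_minDist1 hM fun m n hmn hm hn => ?_
    rw [key]
    refine le_mul_of_one_le_right (by positivity) ?_
    exact_mod_cast Int.one_le_abs (h.mediant_mul_sub_ne_zero hmn (by omega) (by omega))

end minDist1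

theorem FareyPairOrd.feas_mediant {K a b a2 b2 : ℕ} {W1 W2 h11 h21 : ℝ}
    (h : FareyPairOrd K a b a2 b2) (hh11 : 0 < h11) (hh21 : 0 < h21) (hW2 : 0 < W2)
    (hW1 : (a + a2) * h21 * W2 ≤ (b + b2) * h11 * W1) :
    Feas W1 W2 h11 h21 a b a2 b2 ((a + a2) * h21 / ((b + b2) * h11) * W2) W2 := by
  have hdet : (a : ℝ) * b2 - a2 * b = 1 := by exact_mod_cast h.det_eq_one
  have hS : (0 : ℝ) < b + b2 := by have := h.2.1; positivity
  have hA : (0 : ℝ) < a + a2 := by have := h.1; positivity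
  have hw1 :
      h11 * ((a + a2) * h21 / ((b + b2) * h11) * W2) * (b + b2) = (a + a2) * h21 * W2 := by
    field_simp
  set w1 := (a + a2) * h21 / ((b + b2) * h11) * W2
  have hlo : (b + b2) * (a * h21 * W2 - b * h11 * w1) = h21 * W2 := by
    linear_combination (h21 * W2) * hdet - (b : ℝ) * hw1
  have hhi : (b + b2) * (b2 * h11 * w1 - a2 * h21 * W2) = h21 * W2 := by
    linear_combination (h21 * W2) * hdet + (b2 : ℝ) * hw1
  refine ⟨by positivity, ?_, hW2, le_rfl, ?_, ?_⟩
  · exact le_of_mul_le_mul_left (by linarith : (b + b2) * h11 * w1 ≤ _) (by positivity)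
  · nlinarith [pos_of_mul_pos_right (hlo ▸ mul_pos hh21 hW2) hS.le]
  · nlinarith [pos_of_mul_pos_right (hhi ▸ mul_pos hh21 hW2) hS.le]

theorem mul_sqrt_mul_le_mul_sqrt_mul {p1 p2 x y : ℝ} (c : ℝ) (hp1 : 0 ≤ p1) (hp2 : 0 ≤ p2)
    (h : x * √p2 ≤ y * √p1) : x * √(c * p2) ≤ y * √(c * p1) := by
  rw [Real.sqrt_mul' c hp1, Real.sqrt_mul' c hp2]
  nlinarith [Real.sqrt_nonneg c]

theorem lemma1_case1a_general (M : ℕ) (hM : 2 ≤ M)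
    (h11 h21 h22 p1 p2 : ℝ)
    (h11p : 0 < h11) (h21p : 0 < h21) (h22p : 0 < h22)
    (hp1 : 0 < p1) (hp2 : 0 < p2)
    (a b a2 b2 : ℕ) (hfp : FareyPairOrd (M - 1) a b a2 b2)
    (W1 W2 : ℝ)
    (hW1 : W1 = Real.sqrt (3 * p1 / ((M : ℝ) ^ 2 - 1)))
    (hW2 : W2 = Real.sqrt (3 * p2 / ((M : ℝ) ^ 2 - 1)))
    (hcross : h21 / h22 ≤ (b : ℝ) + b2)
    (hratio : Real.sqrt p2 * ((a : ℝ) + a2) / (Real.sqrt p1 * ((b : ℝ) + b2))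
        ≤ h11 / h21) :
    IsGreatest {v : ℝ | ∃ w1 w2 : ℝ, Feas W1 W2 h11 h21 a b a2 b2 w1 w2 ∧
        v = f M h11 h21 h22 w1 w2} (h21 / ((b : ℝ) + b2) * W2) ∧
    Feas W1 W2 h11 h21 a b a2 b2
      ((((a : ℝ) + a2) * h21 / (((b : ℝ) + b2) * h11)) * W2) W2 ∧
    f M h11 h21 h22 ((((a : ℝ) + a2) * h21 / (((b : ℝ) + b2) * h11)) * W2) W2 =
      h21 / ((b : ℝ) + b2) * W2 := by
  have hS : (0 : ℝ) < b + b2 := by have := hfp.2.1; positivity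
  have hW2pos : 0 < W2 := by
    have : (2 : ℝ) ≤ M := by exact_mod_cast hM
    rw [hW2, Real.sqrt_pos]
    exact div_pos (by positivity) (by nlinarith)
  have hbudget : (a + a2) * h21 * W2 ≤ (b + b2) * h11 * W1 := by
    rw [div_le_div_iff₀ (by positivity) h21p] at hratio
    rw [hW1, hW2, mul_div_right_comm, mul_div_right_comm 3 p1]
    exact mul_sqrt_mul_le_mul_sqrt_mul _ hp1.le hp2.le (by linarith)
  have hfeas := hfp.feas_mediant h11p h21p hW2pos hbudget
  have hval :
      f M h11 h21 h22 ((a + a2) * h21 / ((b + b2) * h11) * W2) W2 = h21 / (b + b2) * W2 := by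
    rw [f, hfp.minDist1_eq hM h21p hW2pos (by field_simp), min_eq_left]
    rw [div_le_iff₀ h22p] at hcross
    rw [div_mul_eq_mul_div, div_le_iff₀ hS]
    nlinarith
  refine ⟨⟨⟨_, W2, hfeas, hval.symm⟩, ?_⟩, hfeas, hval⟩
  rintro _ ⟨w1, w2, ⟨-, -, -, hw2W, hlo, hhi⟩, rfl⟩
  calc f M h11 h21 h22 w1 w2 ≤ minDist1 M h11 h21 w1 w2 := min_le_left _ _
    _ ≤ h21 / (b + b2) * w2 := by
      rw [div_mul_eq_mul_div, le_div_iff₀ hS, mul_comm]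
      exact hfp.mul_minDist1_le hlo.le hhi
    _ ≤ h21 / (b + b2) * W2 := by gcongr

/-- Lemma 1, case 1(a): weak-cross-link subcase with large direct-link ratio. -/
theorem lemma1_case1a (M : ℕ) (hM : 2 ≤ M) (hMe : Even M)
    (h11 h21 h22 p1 p2 : ℝ)
    (h11p : 0 < h11) (h21p : 0 < h21) (h22p : 0 < h22)
    (hp1 : 0 < p1) (hp2 : 0 < p2)
    (a b a2 b2 : ℕ) (hfp : FareyPairOrd (M - 1) a b a2 b2)
    (W1 W2 : ℝ)
    (hW1 : W1 = Real.sqrt (3 * p1 / ((M : ℝ) ^ 2 - 1)))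
    (hW2 : W2 = Real.sqrt (3 * p2 / ((M : ℝ) ^ 2 - 1)))
    (hcross : h21 / h22 ≤ (b : ℝ) + b2)
    (hratio : Real.sqrt p2 * ((a : ℝ) + a2) / (Real.sqrt p1 * ((b : ℝ) + b2))
        ≤ h11 / h21) :
    IsGreatest {v : ℝ | ∃ w1 w2 : ℝ, Feas W1 W2 h11 h21 a b a2 b2 w1 w2 ∧
        v = f M h11 h21 h22 w1 w2} (h21 / ((b : ℝ) + b2) * W2) ∧
    Feas W1 W2 h11 h21 a b a2 b2
      ((((a : ℝ) + a2) * h21 / (((b : ℝ) + b2) * h11)) * W2) W2 ∧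
    f M h11 h21 h22 ((((a : ℝ) + a2) * h21 / (((b : ℝ) + b2) * h11)) * W2) W2 =
      h21 / ((b : ℝ) + b2) * W2 :=
  lemma1_case1a_general M hM h11 h21 h22 p1 p2 h11p h21p h22p hp1 hp2 a b a2 b2 hfp W1 W2 hW1 hW2
    hcross hratio
end

section
/- Assume h21/h22 > b + b' and h11/h21 ≥ (√p2/√p1)·( a'/b' + h22/(b'·h21) ). Then the supremum of f(w1,w2) over the interval-restricted feasible set D equals h22·W2, and it is attained at (w1,w2) = ( ((a'·h21 + h22)/(b'·h11))·W2 , W2 ). -/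
lemma farey_side (K a b a2 b2 : ℕ)
    (hno : ¬∃ m n : ℕ, Nat.Coprime m n ∧ ¬(m = 0 ∧ n = 0) ∧ m ≤ K ∧ n ≤ K ∧
      b * m < n * a ∧ n * a2 < b2 * m)
    (m n : ℕ) (hm1 : 1 ≤ m) (hmK : m ≤ K) (hnK : n ≤ K)
    (h : n * a2 < b2 * m) : n * a ≤ b * m := by
  by_contra hlt
  push_neg at hlt
  apply hno
  set d := Nat.gcd m n with hd
  have hdpos : 0 < d := Nat.gcd_pos_of_pos_left n hm1
  have hmd : m / d * d = m := Nat.div_mul_cancel (Nat.gcd_dvd_left m n)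
  have hnd : n / d * d = n := Nat.div_mul_cancel (Nat.gcd_dvd_right m n)
  refine ⟨m / d, n / d, Nat.coprime_div_gcd_div_gcd hdpos, ?_,
    le_trans (Nat.div_le_self _ _) hmK, le_trans (Nat.div_le_self _ _) hnK, ?_, ?_⟩
  · rintro ⟨h1, -⟩; rw [h1] at hmd; simp at hmd; omega
  · have h1 : b * (m / d) * d < n / d * a * d := by
      calc b * (m / d) * d = b * m := by rw [mul_assoc, hmd]
        _ < n * a := hlt
        _ = n / d * a * d := by conv_rhs => rw [mul_right_comm, hnd]
    exact Nat.lt_of_mul_lt_mul_right h1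
  · have h1 : n / d * a2 * d < b2 * (m / d) * d := by
      calc n / d * a2 * d = n * a2 := by rw [mul_right_comm, hnd]
        _ < b2 * m := h
        _ = b2 * (m / d) * d := by rw [mul_assoc, hmd]
    exact Nat.lt_of_mul_lt_mul_right h1

lemma core_aux (K a b a2 b2 : ℕ) (h21 h22 : ℝ) (h21p : 0 < h21) (h22p : 0 < h22)
    (hb2 : 1 ≤ b2) (hcop2 : Nat.Coprime a2 b2) (hdet : b * a2 < b2 * a)
    (hno : ¬∃ m n : ℕ, Nat.Coprime m n ∧ ¬(m = 0 ∧ n = 0) ∧ m ≤ K ∧ n ≤ K ∧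
      b * m < n * a ∧ n * a2 < b2 * m)
    (hcross : ((b : ℝ) + b2) * h22 < h21)
    (m n : ℤ) (hmn : (m, n) ≠ (0, 0)) (hm : |m| ≤ (K : ℤ)) (hn : |n| ≤ (K : ℤ))
    (hn0 : 0 ≤ n) :
    (b2 : ℝ) * h22 ≤ |h21 * ((a2 : ℝ) * n - (b2 : ℝ) * m) + h22 * n| := by
  have hb2R : (1 : ℝ) ≤ (b2 : ℝ) := by exact_mod_cast hb2
  have hbR : (0 : ℝ) ≤ (b : ℝ) := by positivity
  have h2122 : h22 ≤ h21 := by nlinarith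
  rcases eq_or_lt_of_le hn0 with hn1 | hn1
  · -- n = 0, so m ≠ 0
    have hm1 : 1 ≤ |m| := by
      rcases eq_or_ne m 0 with rfl | hm0
      · exact absurd (by rw [← hn1]) hmn
      · exact Int.one_le_abs hm0
    have hm1R : (1 : ℝ) ≤ |(m : ℝ)| := by
      rw [← Int.cast_abs]; exact_mod_cast hm1
    rw [← hn1]
    have he : h21 * ((a2 : ℝ) * ((0:ℤ) : ℝ) - (b2 : ℝ) * m) + h22 * ((0:ℤ) : ℝ)
        = -(h21 * (b2 : ℝ) * m) := by push_cast; ring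
    rw [he, abs_neg, abs_mul, abs_of_nonneg (by positivity : (0:ℝ) ≤ h21 * (b2:ℝ))]
    nlinarith [mul_le_mul_of_nonneg_left hm1R (by positivity : (0:ℝ) ≤ h21 * (b2:ℝ))]
  · -- n ≥ 1
    rcases lt_trichotomy ((a2 : ℤ) * n - (b2 : ℤ) * m) 0 with hkneg | hk0 | hkpos
    · -- k ≤ -1 : m ≥ 1, use Farey
      have hj1 : 1 ≤ (b2 : ℤ) * m - (a2 : ℤ) * n := by omega
      have hmpos : 1 ≤ m := by
        rcases le_or_gt m 0 with hm0 | hm0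
        · exfalso
          have h1 : (0:ℤ) ≤ (a2 : ℤ) * n := by positivity
          have h2 : (b2 : ℤ) * m ≤ 0 :=
            mul_nonpos_of_nonneg_of_nonpos (Int.natCast_nonneg b2) hm0
          omega
        · exact hm0
      lift m to ℕ using (by omega : (0:ℤ) ≤ m) with M'
      lift n to ℕ using hn0 with N'
      push_cast
      rw [Int.abs_natCast] at hm hn
      have hmK : M' ≤ K := by exact_mod_cast hm
      have hnK : N' ≤ K := by exact_mod_cast hn
      have hnat : N' * a2 < b2 * M' := by
        have : (N' : ℤ) * a2 < (b2 : ℤ) * M' := by linarith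
        exact_mod_cast this
      have hside : N' * a ≤ b * M' :=
        farey_side K a b a2 b2 hno M' N' (by exact_mod_cast hmpos) hmK hnK hnat
      have hsideR : (N' : ℝ) * a ≤ (b : ℝ) * M' := by exact_mod_cast hside
      have hdetR : (b : ℝ) * a2 + 1 ≤ (b2 : ℝ) * a := by exact_mod_cast hdet
      have hj1R : (1 : ℝ) ≤ (b2 : ℝ) * M' - (a2 : ℝ) * N' := by exact_mod_cast hj1
      have hbJ : (N' : ℝ) ≤ (b : ℝ) * ((b2 : ℝ) * M' - (a2 : ℝ) * N') := by
        nlinarith [mul_le_mul_of_nonneg_left hsideR (Nat.cast_nonneg b2 : (0:ℝ) ≤ (b2:ℝ)),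
          mul_le_mul_of_nonneg_left hdetR (by positivity : (0:ℝ) ≤ (N':ℝ))]
      have hJpos : (0:ℝ) < (b2 : ℝ) * M' - (a2 : ℝ) * N' := by linarith
      refine le_trans ?_ (neg_le_abs _)
      nlinarith [mul_pos (sub_pos.mpr hcross) hJpos,
        mul_le_mul_of_nonneg_left hbJ (le_of_lt h22p),
        mul_le_mul_of_nonneg_left hj1R (Nat.cast_nonneg b2 : (0:ℝ) ≤ (b2:ℝ))]
    · -- k = 0 : b2 ∣ n
      have hdvd : (b2 : ℤ) ∣ n := by
        have hcop : IsCoprime ((b2 : ℕ) : ℤ) ((a2 : ℕ) : ℤ) :=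
          Int.isCoprime_iff_gcd_eq_one.mpr (by
            simpa [Int.gcd_natCast_natCast] using hcop2.symm)
        exact hcop.dvd_of_dvd_mul_left ⟨m, by linarith⟩
      have hnb2 : (b2 : ℤ) ≤ n := Int.le_of_dvd hn1 hdvd
      have hnb2R : (b2 : ℝ) ≤ (n : ℝ) := by exact_mod_cast hnb2
      have hkR : (a2 : ℝ) * n - (b2 : ℝ) * m = 0 := by exact_mod_cast hk0
      refine le_trans ?_ (le_abs_self _)
      rw [hkR]
      nlinarith
    · -- k ≥ 1
      have hkR : (1 : ℝ) ≤ (a2 : ℝ) * n - (b2 : ℝ) * m := by exact_mod_cast hkpos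
      have hnR : (0 : ℝ) ≤ (n : ℝ) := by exact_mod_cast hn0
      refine le_trans ?_ (le_abs_self _)
      nlinarith

lemma core (K a b a2 b2 : ℕ) (h21 h22 : ℝ) (h21p : 0 < h21) (h22p : 0 < h22)
    (hb2 : 1 ≤ b2) (hcop2 : Nat.Coprime a2 b2) (hdet : b * a2 < b2 * a)
    (hno : ¬∃ m n : ℕ, Nat.Coprime m n ∧ ¬(m = 0 ∧ n = 0) ∧ m ≤ K ∧ n ≤ K ∧
      b * m < n * a ∧ n * a2 < b2 * m)
    (hcross : ((b : ℝ) + b2) * h22 < h21)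
    (m n : ℤ) (hmn : (m, n) ≠ (0, 0)) (hm : |m| ≤ (K : ℤ)) (hn : |n| ≤ (K : ℤ)) :
    (b2 : ℝ) * h22 ≤ |h21 * ((a2 : ℝ) * n - (b2 : ℝ) * m) + h22 * n| := by
  rcases le_or_gt 0 n with hn0 | hn0
  · exact core_aux K a b a2 b2 h21 h22 h21p h22p hb2 hcop2 hdet hno hcross m n hmn hm hn hn0
  · have h := core_aux K a b a2 b2 h21 h22 h21p h22p hb2 hcop2 hdet hno hcross (-m) (-n)
      (by simp only [ne_eq, Prod.mk.injEq, neg_eq_zero, not_and]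
          intro h1 h2; exact hmn (by simp [h1, h2]))
      (by rwa [abs_neg]) (by rwa [abs_neg]) (by omega)
    have he : h21 * ((a2 : ℝ) * ((-n : ℤ) : ℝ) - (b2 : ℝ) * ((-m : ℤ) : ℝ)) + h22 * ((-n : ℤ) : ℝ)
        = -(h21 * ((a2 : ℝ) * n - (b2 : ℝ) * m) + h22 * n) := by push_cast; ring
    rwa [he, abs_neg] at h

set_option maxHeartbeats 1000000 in
/-- Lemma 1, case 2(a): strong-cross-link subcase with large direct-link ratio. -/
theorem lemma1_case2a (M : ℕ) (hM : 2 ≤ M) (hMe : Even M)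
    (h11 h21 h22 p1 p2 : ℝ)
    (h11p : 0 < h11) (h21p : 0 < h21) (h22p : 0 < h22)
    (hp1 : 0 < p1) (hp2 : 0 < p2)
    (a b a2 b2 : ℕ) (hfp : FareyPairOrd (M - 1) a b a2 b2)
    (W1 W2 : ℝ)
    (hW1 : W1 = Real.sqrt (3 * p1 / ((M : ℝ) ^ 2 - 1)))
    (hW2 : W2 = Real.sqrt (3 * p2 / ((M : ℝ) ^ 2 - 1)))
    (hcross : (b : ℝ) + b2 < h21 / h22)
    (hratio : Real.sqrt p2 / Real.sqrt p1 *
        ((a2 : ℝ) / b2 + h22 / ((b2 : ℝ) * h21)) ≤ h11 / h21) :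
    IsGreatest {v : ℝ | ∃ w1 w2 : ℝ, Feas W1 W2 h11 h21 a b a2 b2 w1 w2 ∧
        v = f M h11 h21 h22 w1 w2} (h22 * W2) ∧
    Feas W1 W2 h11 h21 a b a2 b2
      ((((a2 : ℝ) * h21 + h22) / ((b2 : ℝ) * h11)) * W2) W2 ∧
    f M h11 h21 h22 ((((a2 : ℝ) * h21 + h22) / ((b2 : ℝ) * h11)) * W2) W2 =
      h22 * W2 := by
  obtain ⟨ha1, hb2, hcopab, hcop2, haK, hbK, ha2K, hb2K, hdet, hno⟩ := hfp
  have hb2R : (1:ℝ) ≤ (b2:ℝ) := by exact_mod_cast hb2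
  have hb2p : (0:ℝ) < (b2:ℝ) := by linarith
  have hMR : (2:ℝ) ≤ (M:ℝ) := by exact_mod_cast hM
  have hM2 : (0:ℝ) < (M:ℝ)^2 - 1 := by nlinarith
  have hKZ : ((M - 1 : ℕ) : ℤ) = (M : ℤ) - 1 := by omega
  have hW2pos : 0 < W2 := hW2 ▸ Real.sqrt_pos.mpr (by positivity)
  have hs1 : 0 < Real.sqrt p1 := Real.sqrt_pos.mpr hp1
  have hs2 : 0 < Real.sqrt p2 := Real.sqrt_pos.mpr hp2
  have hcross' : ((b:ℝ) + b2) * h22 < h21 := (lt_div_iff₀ h22p).mp hcross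
  set c : ℝ := ((a2 : ℝ) * h21 + h22) / ((b2 : ℝ) * h11) with hc
  have hcpos : 0 < c := by positivity
  -- w1* ≤ W1
  have key2 : Real.sqrt p2 * ((a2:ℝ)*h21 + h22) ≤ Real.sqrt p1 * ((b2:ℝ) * h11) := by
    have h' := mul_le_mul_of_nonneg_left hratio
      (le_of_lt (by positivity : (0:ℝ) < Real.sqrt p1 * ((b2:ℝ) * h21)))
    have e1 : Real.sqrt p1 * ((b2:ℝ)*h21) *
        (Real.sqrt p2 / Real.sqrt p1 * ((a2:ℝ)/b2 + h22/((b2:ℝ)*h21)))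
        = Real.sqrt p2 * ((a2:ℝ)*h21 + h22) := by
      field_simp
    have e2 : Real.sqrt p1 * ((b2:ℝ)*h21) * (h11/h21) = Real.sqrt p1 * ((b2:ℝ)*h11) := by
      field_simp
    rw [e1, e2] at h'
    exact h'
  have hcle : c ≤ Real.sqrt p1 / Real.sqrt p2 := by
    rw [hc, div_le_div_iff₀ (by positivity) hs2]
    nlinarith
  have hW1W2 : W1 = Real.sqrt p1 / Real.sqrt p2 * W2 := by
    rw [hW1, hW2, show 3*p1/((M:ℝ)^2-1) = p1 * (3/((M:ℝ)^2-1)) by ring,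
      show 3*p2/((M:ℝ)^2-1) = p2 * (3/((M:ℝ)^2-1)) by ring,
      Real.sqrt_mul hp1.le, Real.sqrt_mul hp2.le]
    field_simp
  have hw1le : c * W2 ≤ W1 := by
    rw [hW1W2]; exact mul_le_mul_of_nonneg_right hcle hW2pos.le
  -- Feasibility of the claimed maximizer
  have hdetR : (b:ℝ) * a2 + 1 ≤ (b2:ℝ) * a := by exact_mod_cast hdet
  have hfeas : Feas W1 W2 h11 h21 a b a2 b2 (c * W2) W2 := by
    refine ⟨by positivity, hw1le, hW2pos, le_refl _, ?_, ?_⟩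
    · have e : (b:ℝ) * h11 * (c * W2) = (W2 / b2) * ((b:ℝ) * ((a2:ℝ)*h21 + h22)) := by
        rw [hc]; field_simp
      have e' : (a:ℝ) * h21 * W2 = (W2 / b2) * ((a:ℝ) * b2 * h21) := by
        field_simp
      rw [e, e']
      refine mul_lt_mul_of_pos_left ?_ (by positivity : (0:ℝ) < W2 / (b2:ℝ))
      nlinarith [mul_le_mul_of_nonneg_right hdetR h21p.le, mul_pos hb2p h22p,
        Nat.cast_nonneg (α := ℝ) b]
    · have e : (b2:ℝ) * h11 * (c * W2) = ((a2:ℝ)*h21 + h22) * W2 := by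
        rw [hc]; field_simp
      rw [e]
      nlinarith [mul_pos h22p hW2pos]
  -- the value of f at the maximizer
  have hmd : h22 * W2 ≤ minDist1 M h11 h21 (c * W2) W2 := by
    rw [minDist1]
    apply le_csInf
    · exact ⟨|h11 * (c * W2) * ((1:ℤ):ℝ) - h21 * W2 * ((0:ℤ):ℝ)|, 0, 1, by decide,
        by rw [abs_zero]; omega, by rw [abs_one]; omega, rfl⟩
    · rintro d ⟨m, n, hmn, hm, hn, rfl⟩
      have key := core (M-1) a b a2 b2 h21 h22 h21p h22p hb2 hcop2 hdet hno hcross' m n hmn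
        (by omega) (by omega)
      have he : h11 * (c * W2) * (n:ℝ) - h21 * W2 * (m:ℝ)
          = (W2 / b2) * (h21 * ((a2:ℝ) * n - (b2:ℝ) * m) + h22 * n) := by
        rw [hc]; field_simp; ring
      rw [he, abs_mul, abs_of_nonneg (by positivity : (0:ℝ) ≤ W2 / b2)]
      calc h22 * W2 = (W2 / b2) * ((b2:ℝ) * h22) := by field_simp
        _ ≤ (W2 / b2) * |h21 * ((a2:ℝ) * n - (b2:ℝ) * m) + h22 * n| :=
          mul_le_mul_of_nonneg_left key (by positivity)
  have hfval : f M h11 h21 h22 (c * W2) W2 = h22 * W2 := by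
    rw [f]; exact min_eq_right hmd
  refine ⟨⟨⟨c * W2, W2, hfeas, hfval.symm⟩, ?_⟩, hfeas, hfval⟩
  rintro v ⟨w1, w2, ⟨-, -, hw2pos, hw2le, -, -⟩, rfl⟩
  calc f M h11 h21 h22 w1 w2 ≤ h22 * w2 := min_le_right _ _
    _ ≤ h22 * W2 := mul_le_mul_of_nonneg_left hw2le h22p.le
end

section
/- Assume h21/h22 > b + b' and h11/h21 < (√p2/√p1)·( a'/b' + h22/(b'·h21) ). Then the supremum of f(w1,w2) over the interval-restricted feasible set D equals ( b'·h11·h22/(a'·h21 + h22) )·W1, and it is attained at (w1,w2) = ( W1 , ( b'·h11/(a'·h21 + h22) )·W1 ). -/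
lemma both_zero_aux (a b a2 b2 m n : ℕ) (ha : 1 ≤ a) (hDet : b * a2 < b2 * a)
    (h1 : a * n ≤ b * m) (h2 : b2 * m ≤ a2 * n) : m = 0 ∧ n = 0 := by
  have hm0 : m = 0 := by
    by_contra hm0
    have hm1 : 1 ≤ m := Nat.one_le_iff_ne_zero.mpr hm0
    have e1 : a2 * (a * n) ≤ a2 * (b * m) := Nat.mul_le_mul_left a2 h1
    have e2 : a * (b2 * m) ≤ a * (a2 * n) := Nat.mul_le_mul_left a h2
    nlinarith [Nat.mul_le_mul_right m (Nat.succ_le_of_lt hDet)]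
  constructor
  · exact hm0
  · subst hm0
    simp at h1
    omega

set_option maxHeartbeats 1600000 in
/-- Core lower bound for nonnegative pairs in the Farey cone. -/
lemma core_bound (K a b a2 b2 : ℕ) (ha : 1 ≤ a)
    (hcop2 : Nat.Coprime a2 b2) (hDet : b * a2 < b2 * a)
    (dichot : ∀ m n : ℕ, m ≤ K → n ≤ K → ¬((b * m < n * a) ∧ (n * a2 < b2 * m)))
    (x y d1 d2 : ℝ)
    (hd1 : d1 = (a : ℝ) * y - (b : ℝ) * x)
    (hd2 : d2 = (b2 : ℝ) * x - (a2 : ℝ) * y)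
    (hd2nn : 0 ≤ d2)
    (hd1D : ((b2 : ℝ) * a - (b : ℝ) * a2) * d2 ≤ d1)
    (m n : ℕ) (hm : m ≤ K) (hn : n ≤ K) (hmn : ¬(m = 0 ∧ n = 0)) :
    d2 ≤ |(n : ℝ) * x - (m : ℝ) * y| := by
  have hDr : (1 : ℝ) ≤ (b2 : ℝ) * a - (b : ℝ) * a2 := by
    have h := (Nat.cast_le (α := ℝ)).2 (Nat.succ_le_of_lt hDet)
    push_cast at h
    linarith
  obtain ⟨Dr, hDrdef⟩ : ∃ Dr : ℝ, Dr = (b2 : ℝ) * a - (b : ℝ) * a2 := ⟨_, rfl⟩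
  rw [← hDrdef] at hDr hd1D
  have hDrpos : 0 < Dr := lt_of_lt_of_le one_pos hDr
  have hd1nn : 0 ≤ d1 := le_trans (by positivity) hd1D
  have key : Dr * ((m : ℝ) * y - (n : ℝ) * x)
      = ((b2 : ℝ) * m - (a2 : ℝ) * n) * d1 + ((b : ℝ) * m - (a : ℝ) * n) * d2 := by
    rw [hDrdef, hd1, hd2]; ring
  rcases le_or_gt (a * n) (b * m) with hcase | hcase
  · -- t ≥ 0; show s ≥ 1
    have hs : (a2 * n : ℕ) + 1 ≤ b2 * m := by
      by_contra hcon
      push_neg at hcon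
      exact hmn (both_zero_aux a b a2 b2 m n ha hDet hcase (Nat.lt_succ_iff.mp hcon))
    have hsR : (1 : ℝ) ≤ (b2 : ℝ) * m - (a2 : ℝ) * n := by
      have h := (Nat.cast_le (α := ℝ)).2 hs; push_cast at h; linarith
    have htR : (0 : ℝ) ≤ (b : ℝ) * m - (a : ℝ) * n := by
      have h := (Nat.cast_le (α := ℝ)).2 hcase; push_cast at h; linarith
    have h2 : Dr * d2 ≤ Dr * ((m : ℝ) * y - (n : ℝ) * x) := by
      rw [key]
      nlinarith [mul_nonneg htR hd2nn, mul_nonneg (by linarith : (0:ℝ) ≤ (b2 : ℝ) * m - (a2 : ℝ) * n - 1) hd1nn]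
    have h3 : d2 ≤ (m : ℝ) * y - (n : ℝ) * x := le_of_mul_le_mul_left h2 hDrpos
    calc d2 ≤ (m : ℝ) * y - (n : ℝ) * x := h3
      _ = -((n : ℝ) * x - (m : ℝ) * y) := by ring
      _ ≤ |(n : ℝ) * x - (m : ℝ) * y| := neg_le_abs _
  · -- b m < a n ; dichotomy gives b2 m ≤ a2 n
    have hbm : b * m < n * a := by rw [Nat.mul_comm n a]; exact hcase
    have hu : b2 * m ≤ n * a2 := by
      by_contra hcon
      push_neg at hcon
      exact dichot m n hm hn ⟨hbm, hcon⟩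
    have huR : (0 : ℝ) ≤ (a2 : ℝ) * n - (b2 : ℝ) * m := by
      have h := (Nat.cast_le (α := ℝ)).2 hu; push_cast at h; nlinarith [h]
    have hn1 : 1 ≤ n := by
      by_contra hcon
      push_neg at hcon
      interval_cases n <;> omega
    have hvR : (1 : ℝ) ≤ (a : ℝ) * n - (b : ℝ) * m := by
      have h := (Nat.cast_le (α := ℝ)).2 (Nat.succ_le_of_lt hcase)
      push_cast at h; linarith
    -- target: Dr * d2 ≤ Dr * (n x - m y) = u * d1 + v * d2
    have key2 : Dr * ((n : ℝ) * x - (m : ℝ) * y)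
        = ((a2 : ℝ) * n - (b2 : ℝ) * m) * d1 + ((a : ℝ) * n - (b : ℝ) * m) * d2 := by
      rw [hDrdef, hd1, hd2]; ring
    have h2 : Dr * d2 ≤ Dr * ((n : ℝ) * x - (m : ℝ) * y) := by
      rw [key2]
      rcases lt_or_eq_of_le hu with hlt | heq
      · -- u ≥ 1 : u*d1 ≥ d1 ≥ Dr*d2
        have huR1 : (1 : ℝ) ≤ (a2 : ℝ) * n - (b2 : ℝ) * m := by
          have h := (Nat.cast_le (α := ℝ)).2 (Nat.succ_le_of_lt hlt)
          push_cast at h; nlinarith [h]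
        nlinarith [mul_nonneg (by linarith : (0:ℝ) ≤ (a2 : ℝ) * n - (b2 : ℝ) * m - 1) hd1nn,
          mul_nonneg (by linarith : (0:ℝ) ≤ (a : ℝ) * n - (b : ℝ) * m) hd2nn]
      · -- u = 0 : v ≥ Dr
        have hvDr : Dr ≤ (a : ℝ) * n - (b : ℝ) * m := by
          rcases Nat.eq_zero_or_pos a2 with ha2 | ha2
          · -- a2 = 0 → b2 = 1, m = 0
            subst ha2
            have hb2 : b2 = 1 := (Nat.coprime_zero_left b2).mp hcop2
            subst hb2
            have hmz : m = 0 := by omega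
            subst hmz
            have hnn : (1 : ℝ) ≤ (n : ℝ) := (Nat.one_le_cast (α := ℝ)).2 hn1
            have han : (0 : ℝ) ≤ (a : ℝ) := Nat.cast_nonneg a
            rw [hDrdef]
            push_cast
            nlinarith [mul_nonneg han (by linarith : (0:ℝ) ≤ (n:ℝ) - 1)]
          · -- a2 ≥ 1: a2 ∣ m, m = a2*k, n = b2*k, k ≥ 1
            have hdvd : a2 ∣ m := by
              have h1 : a2 ∣ b2 * m := ⟨n, by rw [heq]; ring⟩
              exact Nat.Coprime.dvd_of_dvd_mul_left hcop2 h1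
            obtain ⟨k, hk⟩ := hdvd
            have hnk : n = b2 * k := by
              rw [hk] at heq
              have h1 : a2 * n = a2 * (b2 * k) := by
                calc a2 * n = n * a2 := Nat.mul_comm _ _
                _ = b2 * (a2 * k) := heq.symm
                _ = a2 * (b2 * k) := by ring
              exact Nat.eq_of_mul_eq_mul_left ha2 h1
            have hk1 : 1 ≤ k := by
              rcases Nat.eq_zero_or_pos k with h0 | h0
              · exfalso; subst h0; simp at hnk; omega
              · exact h0
            rw [hk, hnk]
            have hkR : (1 : ℝ) ≤ (k : ℝ) := (Nat.one_le_cast (α := ℝ)).2 hk1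
            push_cast
            rw [hDrdef]
            have hDnn : (0:ℝ) ≤ (b2 : ℝ) * a - (b : ℝ) * a2 := by
              rw [← hDrdef]; linarith
            nlinarith [mul_nonneg hDnn (by linarith : (0:ℝ) ≤ (k:ℝ) - 1)]
        nlinarith [mul_nonneg (by linarith : (0:ℝ) ≤ (a : ℝ) * n - (b : ℝ) * m - Dr) hd2nn,
          mul_nonneg huR hd1nn, mul_nonneg (le_of_lt hDrpos) hd2nn]
    have h3 : d2 ≤ (n : ℝ) * x - (m : ℝ) * y := le_of_mul_le_mul_left h2 hDrpos
    calc d2 ≤ (n : ℝ) * x - (m : ℝ) * y := h3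
      _ ≤ |(n : ℝ) * x - (m : ℝ) * y| := le_abs_self _

lemma pointwise_bound (K a b a2 b2 : ℕ) (ha : 1 ≤ a)
    (hcop2 : Nat.Coprime a2 b2) (hDet : b * a2 < b2 * a)
    (dichot : ∀ m n : ℕ, m ≤ K → n ≤ K → ¬((b * m < n * a) ∧ (n * a2 < b2 * m)))
    (x y d1 d2 : ℝ)
    (hd1 : d1 = (a : ℝ) * y - (b : ℝ) * x)
    (hd2 : d2 = (b2 : ℝ) * x - (a2 : ℝ) * y)
    (hd2nn : 0 ≤ d2)
    (hd1D : ((b2 : ℝ) * a - (b : ℝ) * a2) * d2 ≤ d1)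
    (hx0 : 0 ≤ x) (hy0 : 0 ≤ y) (hxd2 : d2 ≤ x) (hyd2 : d2 ≤ y)
    (m n : ℤ) (hmn : (m, n) ≠ (0, 0)) (hm : |m| ≤ (K : ℤ)) (hn : |n| ≤ (K : ℤ)) :
    d2 ≤ |x * n - y * m| := by
  have habs : ∀ p q : ℤ, 0 ≤ p → 0 ≤ q → |p| ≤ (K : ℤ) → |q| ≤ (K : ℤ) →
      (p, q) ≠ (0, 0) → d2 ≤ |x * q - y * p| := by
    intro p q hp hq hpK hqK hpq
    have h1 : d2 ≤ |(↑(q.toNat) : ℝ) * x - (↑(p.toNat) : ℝ) * y| := by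
      apply core_bound K a b a2 b2 ha hcop2 hDet dichot x y d1 d2 hd1 hd2 hd2nn hd1D
      · have := abs_of_nonneg hp ▸ hpK
        omega
      · have := abs_of_nonneg hq ▸ hqK
        omega
      · intro ⟨h1, h2⟩
        apply hpq
        have : p = 0 := by omega
        have : q = 0 := by omega
        simp_all
    rw [show ((p.toNat : ℕ) : ℝ) = ((p : ℤ) : ℝ) from by exact_mod_cast Int.toNat_of_nonneg hp,
       show ((q.toNat : ℕ) : ℝ) = ((q : ℤ) : ℝ) from by exact_mod_cast Int.toNat_of_nonneg hq] at h1
    calc d2 ≤ |(q : ℝ) * x - (p : ℝ) * y| := h1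
      _ = |x * q - y * p| := by ring_nf
  rcases le_or_gt 0 m with hm0 | hm0 <;> rcases le_or_gt 0 n with hn0 | hn0
  · exact habs m n hm0 hn0 hm hn hmn
  · -- m ≥ 0, n < 0 : value ≥ x
    have hn1 : (n : ℝ) ≤ -1 := by
      have h : n ≤ -1 := by omega
      exact_mod_cast h
    have hmr : (0 : ℝ) ≤ (m : ℝ) := by exact_mod_cast hm0
    have : x ≤ y * m - x * n := by nlinarith [mul_nonneg hy0 hmr]
    calc d2 ≤ x := hxd2
      _ ≤ y * m - x * n := this
      _ = -(x * n - y * m) := by ring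
      _ ≤ |x * n - y * m| := neg_le_abs _
  · -- m < 0, n ≥ 0 : value ≥ y
    have hm1 : (m : ℝ) ≤ -1 := by
      have h : m ≤ -1 := by omega
      exact_mod_cast h
    have hnr : (0 : ℝ) ≤ (n : ℝ) := by exact_mod_cast hn0
    have : y ≤ x * n - y * m := by nlinarith [mul_nonneg hx0 hnr]
    calc d2 ≤ y := hyd2
      _ ≤ x * n - y * m := this
      _ ≤ |x * n - y * m| := le_abs_self _
  · -- both negative
    have h1 := habs (-m) (-n) (by omega) (by omega) (by rwa [abs_neg]) (by rwa [abs_neg])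
      (by simp; omega)
    push_cast at h1
    calc d2 ≤ |x * -(n : ℝ) - y * -(m : ℝ)| := h1
      _ = |x * n - y * m| := by rw [← abs_neg]; ring_nf


lemma minDist1_le_pair (M : ℕ) (h11 h21 w1 w2 : ℝ) (m n : ℤ) (hmn : (m, n) ≠ (0, 0))
    (hm : |m| ≤ (M : ℤ) - 1) (hn : |n| ≤ (M : ℤ) - 1) :
    minDist1 M h11 h21 w1 w2 ≤ |h11 * w1 * n - h21 * w2 * m| := by
  apply csInf_le
  · refine ⟨0, ?_⟩
    rintro d ⟨m', n', -, -, -, rfl⟩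
    exact abs_nonneg _
  · exact ⟨m, n, hmn, hm, hn, rfl⟩

lemma minDist1_ge (M : ℕ) (hM : 2 ≤ M) (h11 h21 w1 w2 c : ℝ)
    (h : ∀ m n : ℤ, (m, n) ≠ (0, 0) → |m| ≤ (M : ℤ) - 1 → |n| ≤ (M : ℤ) - 1 →
      c ≤ |h11 * w1 * n - h21 * w2 * m|) :
    c ≤ minDist1 M h11 h21 w1 w2 := by
  apply le_csInf
  · refine ⟨|h11 * w1 * ((1 : ℤ) : ℝ) - h21 * w2 * ((0 : ℤ) : ℝ)|, 0, 1, by simp, ?_, ?_, rfl⟩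
    · rw [abs_of_nonneg (le_refl (0:ℤ))]; omega
    · rw [show |(1:ℤ)| = 1 from rfl]; omega
  · rintro d ⟨m, n, hmn, hm, hn, rfl⟩
    exact h m n hmn hm hn

lemma dichot_of_farey (K a b a2 b2 : ℕ) (hfp : FareyPairOrd K a b a2 b2) :
    ∀ m n : ℕ, m ≤ K → n ≤ K → ¬((b * m < n * a) ∧ (n * a2 < b2 * m)) := by
  intro m n hm hn hcon
  obtain ⟨h1, h2⟩ := hcon
  obtain ⟨_, _, _, _, _, _, _, _, _, hne⟩ := hfp
  apply hne
  have hmpos : 0 < m := by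
    rcases Nat.eq_zero_or_pos m with h | h
    · subst h; simp at h2
    · exact h
  have hnpos : 0 < n := by
    rcases Nat.eq_zero_or_pos n with h | h
    · subst h; simp at h1
    · exact h
  have hg : 0 < Nat.gcd m n := Nat.gcd_pos_of_pos_left n hmpos
  set g := Nat.gcd m n with hgdef
  have hdm : g ∣ m := Nat.gcd_dvd_left m n
  have hdn : g ∣ n := Nat.gcd_dvd_right m n
  refine ⟨m / g, n / g, Nat.coprime_div_gcd_div_gcd hg, ?_, le_trans (Nat.div_le_self _ _) hm,
    le_trans (Nat.div_le_self _ _) hn, ?_, ?_⟩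
  · intro ⟨hc1, _⟩
    have := Nat.div_pos (Nat.le_of_dvd hmpos hdm) hg
    omega
  · have e1 : g * (m / g) = m := Nat.mul_div_cancel' hdm
    have e2 : g * (n / g) = n := Nat.mul_div_cancel' hdn
    have : g * (b * (m / g)) < g * ((n / g) * a) := by
      calc g * (b * (m / g)) = b * (g * (m / g)) := by ring
      _ = b * m := by rw [e1]
      _ < n * a := h1
      _ = (g * (n / g)) * a := by rw [e2]
      _ = g * ((n / g) * a) := by ring
    exact Nat.lt_of_mul_lt_mul_left this
  · have e1 : g * (m / g) = m := Nat.mul_div_cancel' hdm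
    have e2 : g * (n / g) = n := Nat.mul_div_cancel' hdn
    have : g * ((n / g) * a2) < g * (b2 * (m / g)) := by
      calc g * ((n / g) * a2) = (g * (n / g)) * a2 := by ring
      _ = n * a2 := by rw [e2]
      _ < b2 * m := h2
      _ = b2 * (g * (m / g)) := by rw [e1]
      _ = g * (b2 * (m / g)) := by ring
    exact Nat.lt_of_mul_lt_mul_left this

set_option maxHeartbeats 4000000 in
/-- Lemma 1, case 2(b): strong-cross-link subcase with small direct-link ratio. -/
theorem lemma1_case2b (M : ℕ) (hM : 2 ≤ M) (hMe : Even M)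
    (h11 h21 h22 p1 p2 : ℝ)
    (h11p : 0 < h11) (h21p : 0 < h21) (h22p : 0 < h22)
    (hp1 : 0 < p1) (hp2 : 0 < p2)
    (a b a2 b2 : ℕ) (hfp : FareyPairOrd (M - 1) a b a2 b2)
    (W1 W2 : ℝ)
    (hW1 : W1 = Real.sqrt (3 * p1 / ((M : ℝ) ^ 2 - 1)))
    (hW2 : W2 = Real.sqrt (3 * p2 / ((M : ℝ) ^ 2 - 1)))
    (hcross : (b : ℝ) + b2 < h21 / h22)
    (hratio : h11 / h21 < Real.sqrt p2 / Real.sqrt p1 *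
        ((a2 : ℝ) / b2 + h22 / ((b2 : ℝ) * h21))) :
    IsGreatest {v : ℝ | ∃ w1 w2 : ℝ, Feas W1 W2 h11 h21 a b a2 b2 w1 w2 ∧
        v = f M h11 h21 h22 w1 w2}
      ((b2 : ℝ) * h11 * h22 / ((a2 : ℝ) * h21 + h22) * W1) ∧
    Feas W1 W2 h11 h21 a b a2 b2
      W1 (((b2 : ℝ) * h11 / ((a2 : ℝ) * h21 + h22)) * W1) ∧
    f M h11 h21 h22 W1 (((b2 : ℝ) * h11 / ((a2 : ℝ) * h21 + h22)) * W1) =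
      (b2 : ℝ) * h11 * h22 / ((a2 : ℝ) * h21 + h22) * W1 := by
  have hfp' := hfp
  obtain ⟨ha, hb2, hcop1, hcop2, haK, hbK, ha2K, hb2K, hDet, hne⟩ := hfp'
  have dichot := dichot_of_farey (M - 1) a b a2 b2 hfp
  -- basic positivity
  have hMR : (2 : ℝ) ≤ (M : ℝ) := by exact_mod_cast hM
  have hM21 : (0 : ℝ) < (M : ℝ) ^ 2 - 1 := by nlinarith
  have hW1pos : 0 < W1 := by rw [hW1]; apply Real.sqrt_pos.mpr; positivity
  have hW2pos : 0 < W2 := by rw [hW2]; apply Real.sqrt_pos.mpr; positivity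
  have hb2R : (1 : ℝ) ≤ (b2 : ℝ) := by exact_mod_cast hb2
  have haR : (1 : ℝ) ≤ (a : ℝ) := by exact_mod_cast ha
  have hbR : (0 : ℝ) ≤ (b : ℝ) := Nat.cast_nonneg b
  have ha2R : (0 : ℝ) ≤ (a2 : ℝ) := Nat.cast_nonneg a2
  have hS : (0 : ℝ) < (a2 : ℝ) * h21 + h22 := by positivity
  set S : ℝ := (a2 : ℝ) * h21 + h22 with hSdef
  set w2s : ℝ := (b2 : ℝ) * h11 / S * W1 with hw2sdef
  have hw2spos : 0 < w2s := by
    rw [hw2sdef]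
    have : (0:ℝ) < (b2 : ℝ) := by linarith
    positivity
  have hcross' : ((b : ℝ) + b2) * h22 < h21 := (lt_div_iff₀ h22p).mp hcross
  have hDetR : (b : ℝ) * a2 + 1 ≤ (b2 : ℝ) * a := by
    have h := (Nat.cast_le (α := ℝ)).2 (Nat.succ_le_of_lt hDet)
    push_cast at h; linarith
  have hKcast : ((M - 1 : ℕ) : ℤ) = (M : ℤ) - 1 := by omega
  -- sqrt decompositions
  have hsq1 : W1 = Real.sqrt (3 / ((M : ℝ) ^ 2 - 1)) * Real.sqrt p1 := by
    rw [hW1, show 3 * p1 / ((M : ℝ) ^ 2 - 1) = (3 / ((M : ℝ) ^ 2 - 1)) * p1 by ring,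
      Real.sqrt_mul (by positivity)]
  have hsq2 : W2 = Real.sqrt (3 / ((M : ℝ) ^ 2 - 1)) * Real.sqrt p2 := by
    rw [hW2, show 3 * p2 / ((M : ℝ) ^ 2 - 1) = (3 / ((M : ℝ) ^ 2 - 1)) * p2 by ring,
      Real.sqrt_mul (by positivity)]
  have hsp1 : 0 < Real.sqrt p1 := Real.sqrt_pos.mpr hp1
  have hsp2 : 0 < Real.sqrt p2 := Real.sqrt_pos.mpr hp2
  have hcpos : 0 < Real.sqrt (3 / ((M : ℝ) ^ 2 - 1)) := Real.sqrt_pos.mpr (by positivity)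
  -- w2s ≤ W2 from hratio
  have hw2sW2 : w2s ≤ W2 := by
    have e : Real.sqrt p2 / Real.sqrt p1 * ((a2 : ℝ) / b2 + h22 / ((b2 : ℝ) * h21))
        = Real.sqrt p2 * S / (Real.sqrt p1 * ((b2 : ℝ) * h21)) := by
      rw [hSdef]
      field_simp
    rw [e] at hratio
    rw [div_lt_div_iff₀ h21p (by positivity)] at hratio
    have hkey : (b2 : ℝ) * h11 * Real.sqrt p1 ≤ S * Real.sqrt p2 := by
      have h2 : ((b2:ℝ) * h11 * Real.sqrt p1) * h21 < (S * Real.sqrt p2) * h21 := by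
        calc ((b2:ℝ) * h11 * Real.sqrt p1) * h21
            = h11 * (Real.sqrt p1 * ((b2:ℝ) * h21)) := by ring
          _ < Real.sqrt p2 * S * h21 := hratio
          _ = (S * Real.sqrt p2) * h21 := by ring
      exact le_of_lt (lt_of_mul_lt_mul_right h2 h21p.le)
    rw [hw2sdef, div_mul_eq_mul_div, div_le_iff₀ hS, hsq1, hsq2]
    calc (b2 : ℝ) * h11 * (Real.sqrt (3 / ((M : ℝ) ^ 2 - 1)) * Real.sqrt p1)
        = ((b2 : ℝ) * h11 * Real.sqrt p1) * Real.sqrt (3 / ((M : ℝ) ^ 2 - 1)) := by ring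
      _ ≤ (S * Real.sqrt p2) * Real.sqrt (3 / ((M : ℝ) ^ 2 - 1)) := by
          apply mul_le_mul_of_nonneg_right hkey hcpos.le
      _ = Real.sqrt (3 / ((M : ℝ) ^ 2 - 1)) * Real.sqrt p2 * S := by ring
  -- feasibility of the optimum
  have hfeas : Feas W1 W2 h11 h21 a b a2 b2 W1 w2s := by
    refine ⟨hW1pos, le_refl _, hw2spos, hw2sW2, ?_, ?_⟩
    · -- b h11 W1 < a h21 w2s
      rw [← sub_pos]
      have hnum : (0:ℝ) < (a : ℝ) * h21 * b2 - (b : ℝ) * S := by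
        rw [hSdef]
        linarith [mul_le_mul_of_nonneg_right hDetR h21p.le,
          le_mul_of_one_le_left h22p.le hb2R, hcross', h22p]
      have e : (a : ℝ) * h21 * w2s - (b : ℝ) * h11 * W1
          = ((a : ℝ) * h21 * b2 - (b : ℝ) * S) * (h11 * W1) / S := by
        rw [hw2sdef]; field_simp
      rw [e]
      exact div_pos (mul_pos hnum (mul_pos h11p hW1pos)) hS
    · -- a2 h21 w2s ≤ b2 h11 W1
      rw [← sub_nonneg]
      have e : (b2 : ℝ) * h11 * W1 - (a2 : ℝ) * h21 * w2s
          = (b2 : ℝ) * h22 * (h11 * W1) / S := by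
        rw [hw2sdef, hSdef]; field_simp; ring
      rw [e]; positivity
  -- key quantities at the optimum
  have hh22h21 : h22 < h21 := by
    linarith [le_mul_of_one_le_left h22p.le hb2R, mul_nonneg hbR h22p.le, hcross']
  have hd2x : h22 * w2s = (b2 : ℝ) * (h11 * W1) - (a2 : ℝ) * (h21 * w2s) := by
    rw [hw2sdef, hSdef]; field_simp; ring
  have hDr1 : (1 : ℝ) ≤ (b2 : ℝ) * a - (b : ℝ) * a2 := by linarith
  have hd1D : ((b2 : ℝ) * a - (b : ℝ) * a2) * (h22 * w2s)
      ≤ (a : ℝ) * (h21 * w2s) - (b : ℝ) * (h11 * W1) := by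
    rw [← sub_nonneg]
    have hnum : (0:ℝ) ≤ (a : ℝ) * h21 * b2 - ((b2 : ℝ) * a - (b : ℝ) * a2) * h22 * b2
        - (b : ℝ) * S := by
      rw [hSdef]
      linarith [mul_le_mul_of_nonneg_left hcross'.le
          (by linarith : (0:ℝ) ≤ (b2 : ℝ) * a - (b : ℝ) * a2),
        mul_nonneg (by linarith : (0:ℝ) ≤ (b2 : ℝ) * a - (b : ℝ) * a2 - 1)
          (mul_nonneg hbR h22p.le)]
    have e : (a : ℝ) * (h21 * w2s) - (b : ℝ) * (h11 * W1)
        - ((b2 : ℝ) * a - (b : ℝ) * a2) * (h22 * w2s)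
        = ((a : ℝ) * h21 * b2 - ((b2 : ℝ) * a - (b : ℝ) * a2) * h22 * b2 - (b : ℝ) * S)
          * (h11 * W1) / S := by
      rw [hw2sdef]; field_simp; ring
    rw [e]
    exact div_nonneg (mul_nonneg hnum (by positivity)) hS.le
  have hxd2 : h22 * w2s ≤ h11 * W1 := by
    have hcoef : h22 * b2 ≤ S := by
      rcases Nat.eq_zero_or_pos a2 with ha2z | ha2pos
      · have hb21 : b2 = 1 := by
          have := hcop2
          rw [ha2z] at this
          simpa [Nat.coprime_zero_left] using this
        rw [hSdef, ha2z, hb21]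
        push_cast
        linarith
      · have ha2R1 : (1 : ℝ) ≤ (a2 : ℝ) := by exact_mod_cast ha2pos
        rw [hSdef]
        linarith [le_mul_of_one_le_left h21p.le ha2R1, mul_nonneg hbR h22p.le, hcross',
          le_mul_of_one_le_left h22p.le hb2R]
    rw [← sub_nonneg]
    have e : h11 * W1 - h22 * w2s = (S - h22 * b2) * (h11 * W1) / S := by
      rw [hw2sdef]; field_simp
    rw [e]
    exact div_nonneg (mul_nonneg (by linarith) (by positivity)) hS.le
  have hyd2 : h22 * w2s ≤ h21 * w2s :=
    mul_le_mul_of_nonneg_right hh22h21.le hw2spos.le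
  -- lower bound on minDist1 at the optimum
  have hlow : h22 * w2s ≤ minDist1 M h11 h21 W1 w2s := by
    apply minDist1_ge M hM
    intro m n hmn hm hn
    have := pointwise_bound (M - 1) a b a2 b2 ha hcop2 hDet dichot
      (h11 * W1) (h21 * w2s) ((a : ℝ) * (h21 * w2s) - (b : ℝ) * (h11 * W1)) (h22 * w2s)
      rfl hd2x (by positivity) hd1D (by positivity) (by positivity) hxd2 hyd2
      m n hmn (by rw [hKcast]; exact hm) (by rw [hKcast]; exact hn)
    calc h22 * w2s ≤ |h11 * W1 * n - h21 * w2s * m| := this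
      _ = |h11 * W1 * n - h21 * w2s * m| := rfl
  have hfopt : f M h11 h21 h22 W1 w2s = h22 * w2s := by
    unfold f
    exact min_eq_right hlow
  have hTw2s : (b2 : ℝ) * h11 * h22 / S * W1 = h22 * w2s := by
    rw [hw2sdef]; ring
  refine ⟨⟨⟨W1, w2s, hfeas, by rw [hfopt, hTw2s]⟩, ?_⟩, hfeas, by rw [hfopt, hTw2s]⟩
  -- upper bound over the feasible set
  rintro v ⟨w1, w2, hfs, rfl⟩
  obtain ⟨hw1p, hw1W1, hw2p, hw2W2, hlt, hle⟩ := hfs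
  have hmd_le : minDist1 M h11 h21 w1 w2 ≤ (b2 : ℝ) * h11 * w1 - (a2 : ℝ) * h21 * w2 := by
    have h := minDist1_le_pair M h11 h21 w1 w2 (a2 : ℤ) (b2 : ℤ)
      (by
        intro h
        rw [Prod.mk.injEq] at h
        have hb20 : b2 = 0 := by exact_mod_cast h.2
        omega)
      (by rw [abs_of_nonneg (Int.ofNat_nonneg a2)]; omega)
      (by rw [abs_of_nonneg (Int.ofNat_nonneg b2)]; omega)
    rw [show (((a2 : ℤ) : ℝ)) = (a2 : ℝ) by push_cast; ring,
      show (((b2 : ℤ) : ℝ)) = (b2 : ℝ) by push_cast; ring] at h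
    calc minDist1 M h11 h21 w1 w2 ≤ |h11 * w1 * (b2:ℝ) - h21 * w2 * (a2:ℝ)| := h
      _ = (b2 : ℝ) * h11 * w1 - (a2 : ℝ) * h21 * w2 := by
        rw [abs_of_nonneg (by linarith)]; ring
  have hf1 : f M h11 h21 h22 w1 w2 ≤ (b2 : ℝ) * h11 * w1 - (a2 : ℝ) * h21 * w2 :=
    le_trans (min_le_left _ _) hmd_le
  have hf2 : f M h11 h21 h22 w1 w2 ≤ h22 * w2 := min_le_right _ _
  rw [div_mul_eq_mul_div, le_div_iff₀ hS, hSdef]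
  linarith [mul_le_mul_of_nonneg_right hf1 h22p.le,
    mul_le_mul_of_nonneg_right hf2 (mul_nonneg ha2R h21p.le),
    mul_le_mul_of_nonneg_left hw1W1 (by positivity : (0:ℝ) ≤ h22 * ((b2:ℝ) * h11))]
end

section
/- Suppose 0 < h21 ≤ h22 (weak cross link) and h11/h21 ≥ M·√p2/√p1. Then the maximum of f(w1,w2) over the feasible box 0 < w1 ≤ W1, 0 < w2 ≤ W2 equals h21·W2, and it is attained at (w1,w2) = ( (M·h21/h11)·W2 , W2 ). -/
lemma minDist1_bddBelow (M : ℕ) (h11 h21 w1 w2 : ℝ) :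
    BddBelow {d : ℝ | ∃ m n : ℤ, (m, n) ≠ (0, 0) ∧ |m| ≤ (M : ℤ) - 1 ∧ |n| ≤ (M : ℤ) - 1 ∧
      d = |h11 * w1 * n - h21 * w2 * m|} := by
  refine ⟨0, ?_⟩
  rintro d ⟨m, n, -, -, -, rfl⟩
  exact abs_nonneg _

lemma minDist1_mem (M : ℕ) (hM : 2 ≤ M) (h11 h21 w1 w2 : ℝ) (h21p : 0 ≤ h21) (hw2 : 0 ≤ w2) :
    h21 * w2 ∈ {d : ℝ | ∃ m n : ℤ, (m, n) ≠ (0, 0) ∧ |m| ≤ (M : ℤ) - 1 ∧ |n| ≤ (M : ℤ) - 1 ∧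
      d = |h11 * w1 * n - h21 * w2 * m|} := by
  have hMz : (2 : ℤ) ≤ (M : ℤ) := by exact_mod_cast hM
  refine ⟨1, 0, by decide, ?_, ?_, ?_⟩
  · rw [abs_one]; omega
  · rw [abs_zero]; omega
  · push_cast
    rw [mul_zero, zero_sub, mul_one, abs_neg, abs_of_nonneg (mul_nonneg h21p hw2)]

lemma minDist1_le_s14 (M : ℕ) (hM : 2 ≤ M) (h11 h21 w1 w2 : ℝ) (h21p : 0 ≤ h21) (hw2 : 0 ≤ w2) :
    minDist1 M h11 h21 w1 w2 ≤ h21 * w2 :=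
  csInf_le (minDist1_bddBelow M h11 h21 w1 w2) (minDist1_mem M hM h11 h21 w1 w2 h21p hw2)

lemma Mn_sub_m_ne (M : ℕ) (hM : 2 ≤ M) (m n : ℤ) (hmn : (m, n) ≠ (0, 0))
    (hm : |m| ≤ (M : ℤ) - 1) (hn : |n| ≤ (M : ℤ) - 1) : (M : ℤ) * n - m ≠ 0 := by
  intro h
  have hMz : (2 : ℤ) ≤ (M : ℤ) := by exact_mod_cast hM
  rcases eq_or_ne n 0 with rfl | hn0
  · have : m = 0 := by omega
    exact hmn (by simp [this])
  · have h1 : (1 : ℤ) ≤ |n| := Int.one_le_abs hn0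
    have hm' : m = (M : ℤ) * n := by omega
    have habs : |m| = (M : ℤ) * |n| := by
      rw [hm', abs_mul, abs_of_nonneg (by omega : (0:ℤ) ≤ (M:ℤ))]
    nlinarith

lemma minDist1_opt (M : ℕ) (hM : 2 ≤ M) (h11 h21 W2 : ℝ)
    (h11p : 0 < h11) (h21p : 0 < h21) (hW2 : 0 < W2) :
    minDist1 M h11 h21 ((M : ℝ) * h21 / h11 * W2) W2 = h21 * W2 := by
  have ha : h11 * ((M : ℝ) * h21 / h11 * W2) = (M : ℝ) * (h21 * W2) := by
    field_simp
  unfold minDist1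
  apply le_antisymm
  · exact csInf_le (minDist1_bddBelow _ _ _ _ _)
      (minDist1_mem M hM h11 h21 _ W2 h21p.le hW2.le)
  · apply le_csInf ⟨_, minDist1_mem M hM h11 h21 _ W2 h21p.le hW2.le⟩
    rintro d ⟨m, n, hmn, hm, hn, rfl⟩
    have hne := Mn_sub_m_ne M hM m n hmn hm hn
    have h1 : (1 : ℤ) ≤ |(M : ℤ) * n - m| := Int.one_le_abs hne
    have h1' : (1 : ℝ) ≤ |(M : ℝ) * n - m| := by exact_mod_cast h1
    have heq : h11 * ((M : ℝ) * h21 / h11 * W2) * n - h21 * W2 * m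
        = (h21 * W2) * ((M : ℝ) * n - m) := by
      rw [ha]; ring
    rw [heq, abs_mul, abs_of_nonneg (by positivity : (0:ℝ) ≤ h21 * W2)]
    calc h21 * W2 = h21 * W2 * 1 := (mul_one _).symm
      _ ≤ h21 * W2 * |(M : ℝ) * n - m| :=
        mul_le_mul_of_nonneg_left h1' (by positivity)

/-- Weak cross link (`h21 ≤ h22`) with `h11/h21 ≥ M·√p2/√p1`: the maximum of
`f` over the feasible box equals `h21·W2`, attained at `((M·h21/h11)·W2, W2)`. -/
theorem weak_cross_link_case2 (M : ℕ) (hM : 2 ≤ M) (hMe : Even M)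
    (h11 h21 h22 p1 p2 : ℝ)
    (h11p : 0 < h11) (h21p : 0 < h21) (h22p : 0 < h22)
    (hp1 : 0 < p1) (hp2 : 0 < p2)
    (W1 W2 : ℝ)
    (hW1 : W1 = Real.sqrt (3 * p1 / ((M : ℝ) ^ 2 - 1)))
    (hW2 : W2 = Real.sqrt (3 * p2 / ((M : ℝ) ^ 2 - 1)))
    (hweak : h21 ≤ h22)
    (hratio : (M : ℝ) * Real.sqrt p2 / Real.sqrt p1 ≤ h11 / h21) :
    IsGreatest {v : ℝ | ∃ w1 w2 : ℝ, 0 < w1 ∧ w1 ≤ W1 ∧ 0 < w2 ∧ w2 ≤ W2 ∧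
        v = f M h11 h21 h22 w1 w2} (h21 * W2) ∧
    ((0 : ℝ) < (M : ℝ) * h21 / h11 * W2 ∧ (M : ℝ) * h21 / h11 * W2 ≤ W1 ∧
      0 < W2 ∧ W2 ≤ W2) ∧
    f M h11 h21 h22 ((M : ℝ) * h21 / h11 * W2) W2 = h21 * W2 := by
  have hM2 : (2 : ℝ) ≤ (M : ℝ) := by exact_mod_cast hM
  have hMsq : (0 : ℝ) < (M : ℝ) ^ 2 - 1 := by nlinarith
  set c := Real.sqrt (3 / ((M : ℝ) ^ 2 - 1)) with hc_def
  have hc : 0 < c := Real.sqrt_pos.2 (by positivity)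
  have hW1' : W1 = Real.sqrt p1 * c := by
    rw [hW1, hc_def, ← Real.sqrt_mul hp1.le]
    ring_nf
  have hW2' : W2 = Real.sqrt p2 * c := by
    rw [hW2, hc_def, ← Real.sqrt_mul hp2.le]
    ring_nf
  have hs1 : 0 < Real.sqrt p1 := Real.sqrt_pos.2 hp1
  have hs2 : 0 < Real.sqrt p2 := Real.sqrt_pos.2 hp2
  have hW2pos : 0 < W2 := by rw [hW2']; positivity
  have hw1pos : 0 < (M : ℝ) * h21 / h11 * W2 := by positivity
  have hratio' : (M : ℝ) * Real.sqrt p2 * h21 ≤ h11 * Real.sqrt p1 := by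
    rw [div_le_div_iff₀ hs1 h21p] at hratio
    linarith
  have hw1le : (M : ℝ) * h21 / h11 * W2 ≤ W1 := by
    rw [hW1', hW2', div_mul_eq_mul_div, div_le_iff₀ h11p]
    nlinarith [mul_le_mul_of_nonneg_right hratio' hc.le]
  have hfopt : f M h11 h21 h22 ((M : ℝ) * h21 / h11 * W2) W2 = h21 * W2 := by
    rw [f, minDist1_opt M hM h11 h21 W2 h11p h21p hW2pos]
    exact min_eq_left (mul_le_mul_of_nonneg_right hweak hW2pos.le)
  refine ⟨⟨⟨_, W2, hw1pos, hw1le, hW2pos, le_refl _, hfopt.symm⟩, ?_⟩,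
    ⟨hw1pos, hw1le, hW2pos, le_refl _⟩, hfopt⟩
  rintro v ⟨w1, w2, hw1, hw1', hw2, hw2', rfl⟩
  calc f M h11 h21 h22 w1 w2 ≤ minDist1 M h11 h21 w1 w2 := min_le_left _ _
    _ ≤ h21 * w2 := minDist1_le_s14 M hM h11 h21 w1 w2 h21p.le hw2.le
    _ ≤ h21 * W2 := mul_le_mul_of_nonneg_left hw2' h21p.le
end

section
/- Assume h21 ≤ (b+b')·h22. Then the supremum of b'·h11·w1 − a'·h21·w2 over all (w1,w2) with 0 < w1 ≤ W1, 0 < w2 ≤ W2, b'·h11·w1 − a'·h21·w2 ≤ h22·w2, (b+b')·h11·w1 ≤ (a+a')·h21·w2, and a'·h21·w2 ≤ b'·h11·w1, equals min{ h11·W1/(a+a') , h21·W2/(b+b') }, and the supremum is attained. -/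
set_option maxHeartbeats 1600000 in
/-- Case 1 of Sub-problem 1 (`h21 ≤ (b+b')·h22`): the supremum of
`b'·h11·w1 − a'·h21·w2` over the constrained set equals
`min{ h11·W1/(a+a') , h21·W2/(b+b') }`, and it is attained. -/
theorem subproblem1_case1_weak (a b a2 b2 : ℕ) (ha : 1 ≤ a) (hb2 : 1 ≤ b2)
    (huni : (a : ℤ) * b2 - (a2 : ℤ) * b = 1)
    (h11 h21 h22 W1 W2 : ℝ)
    (h11p : 0 < h11) (h21p : 0 < h21) (h22p : 0 < h22)
    (hW1 : 0 < W1) (hW2 : 0 < W2)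
    (hcross : h21 ≤ ((b : ℝ) + b2) * h22) :
    IsGreatest {v : ℝ | ∃ w1 w2 : ℝ, 0 < w1 ∧ w1 ≤ W1 ∧ 0 < w2 ∧ w2 ≤ W2 ∧
        (b2 : ℝ) * h11 * w1 - (a2 : ℝ) * h21 * w2 ≤ h22 * w2 ∧
        ((b : ℝ) + b2) * h11 * w1 ≤ ((a : ℝ) + a2) * h21 * w2 ∧
        (a2 : ℝ) * h21 * w2 ≤ (b2 : ℝ) * h11 * w1 ∧
        v = (b2 : ℝ) * h11 * w1 - (a2 : ℝ) * h21 * w2}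
      (min (h11 * W1 / ((a : ℝ) + a2)) (h21 * W2 / ((b : ℝ) + b2))) := by
  have ha1 : (1:ℝ) ≤ (a:ℝ) := by exact_mod_cast ha
  have hb21 : (1:ℝ) ≤ (b2:ℝ) := by exact_mod_cast hb2
  have ha2n : (0:ℝ) ≤ (a2:ℝ) := Nat.cast_nonneg a2
  have hbn : (0:ℝ) ≤ (b:ℝ) := Nat.cast_nonneg b
  have hA : (0:ℝ) < (a:ℝ) + a2 := by linarith
  have hB : (0:ℝ) < (b:ℝ) + b2 := by linarith
  have huniR : (a:ℝ) * b2 - (a2:ℝ) * b = 1 := by exact_mod_cast huni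
  have hkey : (b2:ℝ) * ((a:ℝ) + a2) - (a2:ℝ) * ((b:ℝ) + b2) = 1 := by
    linear_combination huniR
  constructor
  · -- membership: construct an attaining point
    rcases le_total (h11 * W1 / ((a:ℝ) + a2)) (h21 * W2 / ((b:ℝ) + b2)) with h | h
    · -- min is the left value; take w1 = W1
      rw [min_eq_left h]
      set w2 : ℝ := ((b:ℝ) + b2) * h11 * W1 / (((a:ℝ) + a2) * h21) with hw2def
      have hw2pos : 0 < w2 := by rw [hw2def]; positivity
      have hEq : ((a:ℝ) + a2) * h21 * w2 = ((b:ℝ) + b2) * h11 * W1 := by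
        rw [hw2def]; field_simp
      have hvEq : (b2:ℝ) * h11 * W1 - (a2:ℝ) * h21 * w2 = h11 * W1 / ((a:ℝ) + a2) := by
        rw [eq_div_iff hA.ne']
        linear_combination h11 * W1 * hkey - (a2:ℝ) * hEq
      have hvEq' : (b2:ℝ) * h11 * W1 - (a2:ℝ) * h21 * w2 = h21 * w2 / ((b:ℝ) + b2) := by
        rw [eq_div_iff hB.ne']
        linear_combination h21 * w2 * hkey - (b2:ℝ) * hEq
      have hdiv : h11 * W1 * ((b:ℝ) + b2) ≤ h21 * W2 * ((a:ℝ) + a2) :=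
        (div_le_div_iff₀ hA hB).mp h
      refine ⟨W1, w2, hW1, le_refl _, hw2pos, ?_, ?_, le_of_eq hEq.symm, ?_, hvEq.symm⟩
      · have h1 : (((a:ℝ) + a2) * h21) * w2 ≤ (((a:ℝ) + a2) * h21) * W2 := by
          nlinarith [hEq, hdiv]
        exact le_of_mul_le_mul_left h1 (by positivity)
      · rw [hvEq', div_le_iff₀ hB]
        nlinarith [mul_le_mul_of_nonneg_right hcross hw2pos.le]
      · have : 0 ≤ h11 * W1 / ((a:ℝ) + a2) := by positivity
        linarith [hvEq]
    · -- min is the right value; take w2 = W2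
      rw [min_eq_right h]
      set w1 : ℝ := ((a:ℝ) + a2) * h21 * W2 / (((b:ℝ) + b2) * h11) with hw1def
      have hw1pos : 0 < w1 := by rw [hw1def]; positivity
      have hEq : ((b:ℝ) + b2) * h11 * w1 = ((a:ℝ) + a2) * h21 * W2 := by
        rw [hw1def]; field_simp
      have hvEq : (b2:ℝ) * h11 * w1 - (a2:ℝ) * h21 * W2 = h21 * W2 / ((b:ℝ) + b2) := by
        rw [eq_div_iff hB.ne']
        linear_combination h21 * W2 * hkey + (b2:ℝ) * hEq
      have hdiv : h21 * W2 * ((a:ℝ) + a2) ≤ h11 * W1 * ((b:ℝ) + b2) :=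
        (div_le_div_iff₀ hB hA).mp h
      refine ⟨w1, W2, hw1pos, ?_, hW2, le_refl _, ?_, le_of_eq hEq, ?_, hvEq.symm⟩
      · have h1 : (((b:ℝ) + b2) * h11) * w1 ≤ (((b:ℝ) + b2) * h11) * W1 := by
          nlinarith [hEq, hdiv]
        exact le_of_mul_le_mul_left h1 (by positivity)
      · rw [hvEq, div_le_iff₀ hB]
        nlinarith [mul_le_mul_of_nonneg_right hcross hW2.le]
      · have : 0 ≤ h21 * W2 / ((b:ℝ) + b2) := by positivity
        linarith [hvEq]
  · -- upper bound
    rintro v ⟨w1, w2, hw1, hw1W, hw2, hw2W, hc1, hc2, hc3, rfl⟩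
    have id1 : ((b2:ℝ) * h11 * w1 - (a2:ℝ) * h21 * w2) * ((a:ℝ) + a2)
        = h11 * w1 + (a2:ℝ) * (((b:ℝ) + b2) * h11 * w1 - ((a:ℝ) + a2) * h21 * w2) := by
      linear_combination h11 * w1 * hkey
    have id2 : ((b2:ℝ) * h11 * w1 - (a2:ℝ) * h21 * w2) * ((b:ℝ) + b2)
        = h21 * w2 - (b2:ℝ) * (((a:ℝ) + a2) * h21 * w2 - ((b:ℝ) + b2) * h11 * w1) := by
      linear_combination h21 * w2 * hkey
    have hn1 : (a2:ℝ) * (((b:ℝ) + b2) * h11 * w1 - ((a:ℝ) + a2) * h21 * w2) ≤ 0 :=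
      mul_nonpos_of_nonneg_of_nonpos ha2n (by linarith)
    have hn2 : 0 ≤ (b2:ℝ) * (((a:ℝ) + a2) * h21 * w2 - ((b:ℝ) + b2) * h11 * w1) :=
      mul_nonneg (by linarith) (by linarith)
    have hm1 : h11 * w1 ≤ h11 * W1 := mul_le_mul_of_nonneg_left hw1W h11p.le
    have hm2 : h21 * w2 ≤ h21 * W2 := mul_le_mul_of_nonneg_left hw2W h21p.le
    refine le_min ?_ ?_
    · rw [le_div_iff₀ hA]; linarith
    · rw [le_div_iff₀ hB]; linarith
end

section
/- Assume h21 > (b+b')·h22. Then the supremum of b'·h11·w1 − a'·h21·w2 over all (w1,w2) with 0 < w1 ≤ W1, 0 < w2 ≤ W2, b'·h11·w1 − a'·h21·w2 ≤ h22·w2, (b+b')·h11·w1 ≤ (a+a')·h21·w2, and a'·h21·w2 ≤ b'·h11·w1, equals min{ b'·h11·h22·W1/(a'·h21 + h22) , h22·W2 }, and the supremum is attained. -/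
/-!
Write `p = b'h₁₁`, `q = a'h₂₁`, `r = h₂₂`. On the feasible set the objective `p w₁ - q w₂` is at
most `r w₂ ≤ r W₂` by the first constraint, and at most `p r W₁ / (q + r)` because eliminating
`w₂` through the same constraint leaves `p r w₁ / (q + r)`. Both bounds are met on the line
`p w₁ = (q + r) w₂` at `w₂ = min (p W₁ / (q + r)) W₂`. That point satisfies the mediant
constraint because `(a + a') b' - (b + b') a' = a b' - a' b = 1` reduces it to
`(b + b') h₂₂ ≤ h₂₁`.
-/

section Bounds

variable {p q r w₁ w₂ W₁ W₂ : ℝ}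

lemma sub_le_mul_div_of_sub_le (hp : 0 ≤ p) (hq : 0 ≤ q) (hr : 0 < r)
    (h : p * w₁ - q * w₂ ≤ r * w₂) (hw₁ : w₁ ≤ W₁) :
    p * w₁ - q * w₂ ≤ p * r * W₁ / (q + r) := by
  rw [le_div_iff₀ (by positivity)]
  calc (p * w₁ - q * w₂) * (q + r) = r * (p * w₁) + q * (p * w₁ - q * w₂ - r * w₂) := by ring
    _ ≤ r * (p * W₁) + q * 0 := by
        gcongr
        linarith
    _ = p * r * W₁ := by ring

lemma sub_le_min_of_sub_le (hp : 0 ≤ p) (hq : 0 ≤ q) (hr : 0 < r)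
    (h : p * w₁ - q * w₂ ≤ r * w₂) (hw₁ : w₁ ≤ W₁) (hw₂ : w₂ ≤ W₂) :
    p * w₁ - q * w₂ ≤ min (p * r * W₁ / (q + r)) (r * W₂) :=
  le_min (sub_le_mul_div_of_sub_le hp hq hr h hw₁) (h.trans (by gcongr))

lemma exists_eq_min_of_mul_eq (hp : 0 < p) (hq : 0 ≤ q) (hr : 0 < r)
    (hW₁ : 0 < W₁) (hW₂ : 0 < W₂) :
    ∃ w₁ w₂, 0 < w₁ ∧ w₁ ≤ W₁ ∧ 0 < w₂ ∧ w₂ ≤ W₂ ∧ p * w₁ = (q + r) * w₂ ∧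
      r * w₂ = min (p * r * W₁ / (q + r)) (r * W₂) := by
  have hqr : 0 < q + r := by positivity
  set w₂ := min (p * W₁ / (q + r)) W₂
  have hw₂ : 0 < w₂ := lt_min (by positivity) hW₂
  refine ⟨(q + r) * w₂ / p, w₂, by positivity, ?_, hw₂, min_le_right _ _, by field_simp, ?_⟩
  · rw [div_le_iff₀ hp, ← le_div_iff₀' hqr, mul_comm]
    exact min_le_left _ _
  · rw [mul_min_of_nonneg _ _ hr.le, mul_div_assoc', mul_left_comm, mul_assoc]

end Bounds

lemma mediant_mul_le {a b a' b' h₂₁ h₂₂ : ℝ} (huni : a * b' - a' * b = 1)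
    (hcross : (b + b') * h₂₂ ≤ h₂₁) :
    (b + b') * (a' * h₂₁ + h₂₂) ≤ b' * ((a + a') * h₂₁) := by
  linear_combination hcross - h₂₁ * huni

theorem subproblem1_case1_strong_general (a b a2 b2 : ℕ) (hb2 : 1 ≤ b2)
    (huni : (a : ℤ) * b2 - (a2 : ℤ) * b = 1)
    (h11 h21 h22 W1 W2 : ℝ)
    (h11p : 0 < h11) (h21p : 0 < h21) (h22p : 0 < h22)
    (hW1 : 0 < W1) (hW2 : 0 < W2)
    (hcross : ((b : ℝ) + b2) * h22 < h21) :
    IsGreatest {v : ℝ | ∃ w1 w2 : ℝ, 0 < w1 ∧ w1 ≤ W1 ∧ 0 < w2 ∧ w2 ≤ W2 ∧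
        (b2 : ℝ) * h11 * w1 - (a2 : ℝ) * h21 * w2 ≤ h22 * w2 ∧
        ((b : ℝ) + b2) * h11 * w1 ≤ ((a : ℝ) + a2) * h21 * w2 ∧
        (a2 : ℝ) * h21 * w2 ≤ (b2 : ℝ) * h11 * w1 ∧
        v = (b2 : ℝ) * h11 * w1 - (a2 : ℝ) * h21 * w2}
      (min ((b2 : ℝ) * h11 * h22 * W1 / ((a2 : ℝ) * h21 + h22)) (h22 * W2)) := by
  have hb2' : (0 : ℝ) < b2 := by exact_mod_cast hb2
  have hq : (0 : ℝ) ≤ a2 * h21 := by positivity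
  refine ⟨?_, ?_⟩
  · obtain ⟨w1, w2, hw1, hw1W, hw2, hw2W, htight, hval⟩ :=
      exists_eq_min_of_mul_eq (p := b2 * h11) (by positivity) hq h22p hW1 hW2
    have huni' : (a : ℝ) * b2 - a2 * b = 1 := by exact_mod_cast huni
    have hmed := mediant_mul_le huni' hcross.le
    refine ⟨w1, w2, hw1, hw1W, hw2, hw2W, by linarith, ?_, by linarith [mul_pos h22p hw2],
      by linarith⟩
    refine le_of_mul_le_mul_left ?_ hb2'
    calc (b2 : ℝ) * (((b : ℝ) + b2) * h11 * w1)
          = ((b : ℝ) + b2) * ((a2 * h21 + h22) * w2) := by rw [← htight]; ring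
      _ ≤ (b2 : ℝ) * (((a : ℝ) + a2) * h21 * w2) := by
          linarith [mul_le_mul_of_nonneg_right hmed hw2.le]
  · rintro v ⟨w1, w2, -, hw1W, -, hw2W, hdist, -, -, rfl⟩
    exact sub_le_min_of_sub_le (by positivity) hq h22p hdist hw1W hw2W

/-- Case 1 of Sub-problem 1 (`h21 > (b+b')·h22`): the supremum of
`b'·h11·w1 − a'·h21·w2` over the constrained set equals
`min{ b'·h11·h22·W1/(a'·h21 + h22) , h22·W2 }`, and it is attained. -/
theorem subproblem1_case1_strong (a b a2 b2 : ℕ) (ha : 1 ≤ a) (hb2 : 1 ≤ b2)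
    (huni : (a : ℤ) * b2 - (a2 : ℤ) * b = 1)
    (h11 h21 h22 W1 W2 : ℝ)
    (h11p : 0 < h11) (h21p : 0 < h21) (h22p : 0 < h22)
    (hW1 : 0 < W1) (hW2 : 0 < W2)
    (hcross : ((b : ℝ) + b2) * h22 < h21) :
    IsGreatest {v : ℝ | ∃ w1 w2 : ℝ, 0 < w1 ∧ w1 ≤ W1 ∧ 0 < w2 ∧ w2 ≤ W2 ∧
        (b2 : ℝ) * h11 * w1 - (a2 : ℝ) * h21 * w2 ≤ h22 * w2 ∧
        ((b : ℝ) + b2) * h11 * w1 ≤ ((a : ℝ) + a2) * h21 * w2 ∧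
        (a2 : ℝ) * h21 * w2 ≤ (b2 : ℝ) * h11 * w1 ∧
        v = (b2 : ℝ) * h11 * w1 - (a2 : ℝ) * h21 * w2}
      (min ((b2 : ℝ) * h11 * h22 * W1 / ((a2 : ℝ) * h21 + h22)) (h22 * W2)) :=
  subproblem1_case1_strong_general a b a2 b2 hb2 huni h11 h21 h22 W1 W2 h11p h21p h22p hW1 hW2
    hcross
end

section
/- Assume h21 ≥ (b+b')·h22. Then the supremum of h22·w2 over all (w1,w2) with 0 < w1 ≤ W1, 0 < w2 ≤ W2, h22·w2 ≤ b'·h11·w1 − a'·h21·w2, and (b+b')·h11·w1 ≤ (a+a')·h21·w2, equals min{ b'·h11·h22·W1/(a'·h21 + h22) , h22·W2 }, and the supremum is attained. (If instead h21 < (b+b')·h22, the feasible set is empty.) -/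
/-!
Write `D = a'·h21 + h22`; the first constraint reads `D·w2 ≤ b'·h11·w1`. Eliminating `w1`
between the two constraints, unimodularity turns `b'·(a+a')·h21 - (b+b')·D` into
`h21 - (b+b')·h22`, so the constraints are compatible exactly when `(b+b')·h22 ≤ h21`.
In that case the objective is largest when the first constraint is tight, i.e.
`w1 = D·w2/(b'·h11)`, and `w2` is pushed up to the first of the bounds `w1 ≤ W1`, `w2 ≤ W2`.
-/

section Feasibility

variable {a b a' b' h11 h21 h22 w1 w2 : ℝ}

lemma mediant_gap (huni : a * b' - a' * b = 1) :
    b' * ((a + a') * h21) - (b + b') * (a' * h21 + h22) = h21 - (b + b') * h22 := by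
  linear_combination h21 * huni

lemma le_of_constraints (huni : a * b' - a' * b = 1) (hb : 0 ≤ b + b') (hb' : 0 ≤ b')
    (hw2 : 0 < w2) (h1 : h22 * w2 ≤ b' * h11 * w1 - a' * h21 * w2)
    (h2 : (b + b') * h11 * w1 ≤ (a + a') * h21 * w2) :
    (b + b') * h22 ≤ h21 := by
  have hgap : 0 ≤ (h21 - (b + b') * h22) * w2 := by
    rw [← mediant_gap huni]
    linarith [mul_le_mul_of_nonneg_left h2 hb', mul_le_mul_of_nonneg_left h1 hb]
  linarith [nonneg_of_mul_nonneg_left hgap hw2]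

lemma objective_le_min {W1 W2 : ℝ} (hD : 0 < a' * h21 + h22) (hc : 0 ≤ b' * h11)
    (hh22 : 0 ≤ h22) (h1 : h22 * w2 ≤ b' * h11 * w1 - a' * h21 * w2)
    (hw1 : w1 ≤ W1) (hw2 : w2 ≤ W2) :
    h22 * w2 ≤ min (b' * h11 * h22 * W1 / (a' * h21 + h22)) (h22 * W2) := by
  refine le_min ?_ (mul_le_mul_of_nonneg_left hw2 hh22)
  rw [le_div_iff₀ hD]
  calc h22 * w2 * (a' * h21 + h22) = h22 * ((a' * h21 + h22) * w2) := by ring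
    _ ≤ h22 * (b' * h11 * W1) :=
      mul_le_mul_of_nonneg_left (by linarith [mul_le_mul_of_nonneg_left hw1 hc]) hh22
    _ = b' * h11 * h22 * W1 := by ring

lemma tight_point_feasible (huni : a * b' - a' * b = 1) (hgap : (b + b') * h22 ≤ h21)
    (hb' : 0 < b') (hh11 : 0 < h11) (hD : 0 < a' * h21 + h22) (hw2 : 0 < w2) :
    0 < (a' * h21 + h22) * w2 / (b' * h11) ∧
      h22 * w2 ≤ b' * h11 * ((a' * h21 + h22) * w2 / (b' * h11)) - a' * h21 * w2 ∧
      (b + b') * h11 * ((a' * h21 + h22) * w2 / (b' * h11)) ≤ (a + a') * h21 * w2 := by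
  have htight : b' * h11 * ((a' * h21 + h22) * w2 / (b' * h11)) = (a' * h21 + h22) * w2 := by
    field_simp
  refine ⟨by positivity, by linarith, ?_⟩
  refine le_of_mul_le_mul_left ?_ hb'
  have hmediant : (b + b') * (a' * h21 + h22) ≤ b' * ((a + a') * h21) := by
    linarith [mediant_gap (h21 := h21) (h22 := h22) huni]
  calc b' * ((b + b') * h11 * ((a' * h21 + h22) * w2 / (b' * h11)))
      = (b + b') * (b' * h11 * ((a' * h21 + h22) * w2 / (b' * h11))) := by ring
    _ = (b + b') * (a' * h21 + h22) * w2 := by rw [htight]; ring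
    _ ≤ b' * ((a + a') * h21) * w2 := by gcongr
    _ = b' * ((a + a') * h21 * w2) := by ring

end Feasibility

theorem subproblem1_case2_general (a b a2 b2 : ℕ) (hb2 : 1 ≤ b2)
    (huni : (a : ℤ) * b2 - (a2 : ℤ) * b = 1)
    (h11 h21 h22 W1 W2 : ℝ)
    (h11p : 0 < h11) (h21p : 0 < h21) (h22p : 0 < h22)
    (hW1 : 0 < W1) (hW2 : 0 < W2) :
    (((b : ℝ) + b2) * h22 ≤ h21 →
      IsGreatest {v : ℝ | ∃ w1 w2 : ℝ, 0 < w1 ∧ w1 ≤ W1 ∧ 0 < w2 ∧ w2 ≤ W2 ∧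
          h22 * w2 ≤ (b2 : ℝ) * h11 * w1 - (a2 : ℝ) * h21 * w2 ∧
          ((b : ℝ) + b2) * h11 * w1 ≤ ((a : ℝ) + a2) * h21 * w2 ∧
          v = h22 * w2}
        (min ((b2 : ℝ) * h11 * h22 * W1 / ((a2 : ℝ) * h21 + h22)) (h22 * W2))) ∧
    (h21 < ((b : ℝ) + b2) * h22 →
      {v : ℝ | ∃ w1 w2 : ℝ, 0 < w1 ∧ w1 ≤ W1 ∧ 0 < w2 ∧ w2 ≤ W2 ∧
          h22 * w2 ≤ (b2 : ℝ) * h11 * w1 - (a2 : ℝ) * h21 * w2 ∧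
          ((b : ℝ) + b2) * h11 * w1 ≤ ((a : ℝ) + a2) * h21 * w2 ∧
          v = h22 * w2} = ∅) := by
  have huniR : (a : ℝ) * b2 - a2 * b = 1 := by exact_mod_cast huni
  have hb2R : (0 : ℝ) < b2 := by exact_mod_cast hb2
  have hD : 0 < (a2 : ℝ) * h21 + h22 := by positivity
  refine ⟨fun hgap => ⟨?_, ?_⟩, fun hgap => ?_⟩
  · obtain ⟨w2, hw2def⟩ : ∃ w2, w2 = min ((b2 : ℝ) * h11 * W1 / ((a2 : ℝ) * h21 + h22)) W2 :=
      ⟨_, rfl⟩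
    have hw2 : 0 < w2 := hw2def ▸ lt_min (by positivity) hW2
    obtain ⟨hw1, h1, h2⟩ := tight_point_feasible huniR hgap hb2R h11p hD hw2
    refine ⟨_, w2, hw1, ?_, hw2, hw2def ▸ min_le_right _ _, h1, h2, ?_⟩
    · have hw2W1 : w2 * ((a2 : ℝ) * h21 + h22) ≤ b2 * h11 * W1 :=
        (le_div_iff₀ hD).mp (hw2def ▸ min_le_left _ W2)
      rw [div_le_iff₀ (by positivity)]
      linarith
    · rw [hw2def, mul_min_of_nonneg _ _ h22p.le]
      congr 1
      ring
  · rintro v ⟨w1, w2, -, hw1, -, hw2, h1, -, rfl⟩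
    exact objective_le_min hD (by positivity) h22p.le h1 hw1 hw2
  · refine Set.eq_empty_iff_forall_notMem.mpr ?_
    rintro v ⟨w1, w2, -, -, hw2, -, h1, h2, -⟩
    exact hgap.not_ge (le_of_constraints huniR (by positivity) (by positivity) hw2 h1 h2)

/-- Case 2 of Sub-problem 1: if `h21 ≥ (b+b')·h22` then the supremum of
`h22·w2` over the constrained set equals
`min{ b'·h11·h22·W1/(a'·h21 + h22) , h22·W2 }` and is attained;
if `h21 < (b+b')·h22` the feasible set is empty. -/
theorem subproblem1_case2 (a b a2 b2 : ℕ) (ha : 1 ≤ a) (hb2 : 1 ≤ b2)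
    (huni : (a : ℤ) * b2 - (a2 : ℤ) * b = 1)
    (h11 h21 h22 W1 W2 : ℝ)
    (h11p : 0 < h11) (h21p : 0 < h21) (h22p : 0 < h22)
    (hW1 : 0 < W1) (hW2 : 0 < W2) :
    (((b : ℝ) + b2) * h22 ≤ h21 →
      IsGreatest {v : ℝ | ∃ w1 w2 : ℝ, 0 < w1 ∧ w1 ≤ W1 ∧ 0 < w2 ∧ w2 ≤ W2 ∧
          h22 * w2 ≤ (b2 : ℝ) * h11 * w1 - (a2 : ℝ) * h21 * w2 ∧
          ((b : ℝ) + b2) * h11 * w1 ≤ ((a : ℝ) + a2) * h21 * w2 ∧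
          v = h22 * w2}
        (min ((b2 : ℝ) * h11 * h22 * W1 / ((a2 : ℝ) * h21 + h22)) (h22 * W2))) ∧
    (h21 < ((b : ℝ) + b2) * h22 →
      {v : ℝ | ∃ w1 w2 : ℝ, 0 < w1 ∧ w1 ≤ W1 ∧ 0 < w2 ∧ w2 ≤ W2 ∧
          h22 * w2 ≤ (b2 : ℝ) * h11 * w1 - (a2 : ℝ) * h21 * w2 ∧
          ((b : ℝ) + b2) * h11 * w1 ≤ ((a : ℝ) + a2) * h21 * w2 ∧
          v = h22 * w2} = ∅) :=
  subproblem1_case2_general a b a2 b2 hb2 huni h11 h21 h22 W1 W2 h11p h21p h22p hW1 hW2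
end
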